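/- For closed PCF_v expressions ⊢ e1 : T and ⊢ e2 : T, e1 ≈ e2 (the initial configurations C_{e1} and C_{e2} are weakly bisimilar) if and only if ⟦e1⟧ = ⟦e2⟧. -/

import Mathlib

set_option linter.unusedVariables false
set_option linter.unnecessarySeqFocus false

namespace PCFv

/-- Concatenation of a list of lists. -/
def flat {β : Type _} : List (List β) → List β
  | [] => []
  | l :: ls => l ++ flat ls

/-! ## Types, constants and primitive operations of PCF_v -/

inductive Ty : Type
  | bool | int | unit
  | arrow (a b : Ty)
  | prod (Ts : List Ty)

inductive Const : Type
  | unit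
  | bool (b : Bool)
  | int (n : Int)
  deriving DecidableEq

def Const.ty : Const → Ty
  | .unit => .unit
  | .bool _ => .bool
  | .int _ => .int

inductive PrimOp : Type
  | add | sub | mul | le | neg | conj | disj | eqc
  deriving DecidableEq

def PrimOp.eval : PrimOp → List Const → Option Const
  | .add, [.int m, .int n] => some (.int (m + n))
  | .sub, [.int m, .int n] => some (.int (m - n))
  | .mul, [.int m, .int n] => some (.int (m * n))
  | .le,  [.int m, .int n] => some (.bool (decide (m ≤ n)))
  | .neg, [.bool b] => some (.bool (!b))
  | .conj, [.bool a, .bool b] => some (.bool (a && b))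
  | .disj, [.bool a, .bool b] => some (.bool (a || b))
  | .eqc, [c1, c2] => some (.bool (decide (c1 = c2)))
  | _, _ => none

inductive PrimTy : PrimOp → List Ty → Ty → Prop
  | add : PrimTy .add [.int, .int] .int
  | sub : PrimTy .sub [.int, .int] .int
  | mul : PrimTy .mul [.int, .int] .int
  | le : PrimTy .le [.int, .int] .bool
  | neg : PrimTy .neg [.bool] .bool
  | conj : PrimTy .conj [.bool, .bool] .bool
  | disj : PrimTy .disj [.bool, .bool] .bool
  | eqc {T : Ty} (h : T = .int ∨ T = .bool ∨ T = .unit) : PrimTy .eqc [T, T] .bool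

/-! ## Expressions (with abstract function names, used by the LTSs) -/

/-- Expressions in de Bruijn representation.  `fixfun T1 T2 b` is the recursive
function `λ^f x. b` (variable 0 is `x`, variable 1 is `f`); `aname a j T` is an
abstract (opponent-generated) function name `α_T^j`; `letTup n e b` is the
tuple-deconstructing let `let (x_1,…,x_n) = e in b` (variables `0..n-1`). -/
inductive Expr : Type
  | var (n : Nat)
  | aname (a j : Nat) (T : Ty)
  | const (c : Const)
  | fixfun (T1 T2 : Ty) (body : Expr)
  | tuple (es : List Expr)
  | prim (op : PrimOp) (es : List Expr)
  | app (e1 e2 : Expr)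
  | ite (b e1 e2 : Expr)
  | letTup (n : Nat) (e body : Expr)

instance : Inhabited Expr := ⟨.const .unit⟩

/-- Simultaneous substitution of the closed values `vs` for the variables
`d, …, d + vs.length - 1` (under `d` binders). -/
def Expr.inst (vs : List Expr) : Nat → Expr → Expr
  | d, .var n =>
      if n < d then .var n
      else
        match vs[n - d]? with
        | some v => v
        | none => .var (n - vs.length)
  | _, .aname a j T => .aname a j T
  | _, .const c => .const c
  | d, .fixfun T1 T2 b => .fixfun T1 T2 (Expr.inst vs (d + 2) b)
  | d, .tuple es => .tuple (es.attach.map fun x => Expr.inst vs d x.1)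
  | d, .prim op es => .prim op (es.attach.map fun x => Expr.inst vs d x.1)
  | d, .app e1 e2 => .app (Expr.inst vs d e1) (Expr.inst vs d e2)
  | d, .ite b e1 e2 => .ite (Expr.inst vs d b) (Expr.inst vs d e1) (Expr.inst vs d e2)
  | d, .letTup n e b => .letTup n (Expr.inst vs d e) (Expr.inst vs (d + n) b)
termination_by d e => sizeOf e
decreasing_by all_goals (simp_wf <;> first
  | omega
  | (have := List.sizeOf_lt_of_mem x.2; omega))

/-- Abstract function names occurring in an expression. -/
def Expr.anames : Expr → List Nat
  | .var _ => []
  | .aname a _ _ => [a]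
  | .const _ => []
  | .fixfun _ _ b => b.anames
  | .tuple es => flat (es.attach.map fun x => x.1.anames)
  | .prim _ es => flat (es.attach.map fun x => x.1.anames)
  | .app e1 e2 => e1.anames ++ e2.anames
  | .ite b e1 e2 => b.anames ++ e1.anames ++ e2.anames
  | .letTup _ e b => e.anames ++ b.anames
termination_by e => sizeOf e
decreasing_by all_goals (simp_wf <;> first
  | omega
  | (have := List.sizeOf_lt_of_mem x.2; omega))

inductive IsValue : Expr → Prop
  | const (c : Const) : IsValue (.const c)
  | aname (a j : Nat) (T : Ty) : IsValue (.aname a j T)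
  | fixfun (T1 T2 : Ty) (b : Expr) : IsValue (.fixfun T1 T2 b)
  | tuple {es : List Expr} (h : ∀ e ∈ es, IsValue e) : IsValue (.tuple es)

/-! ## Typing -/

/-- Typing judgement, parameterised by whether abstract function names are
allowed.  `Typed := TypedA false` is the typing judgement of pure PCF_v,
`TypedN := TypedA true` additionally types abstract function names. -/
inductive TypedA (allow : Bool) : List Ty → Expr → Ty → Prop
  | var {Γ n T} (h : Γ[n]? = some T) : TypedA allow Γ (.var n) T
  | aname {Γ a j T1 T2} (hallow : allow = true) :
      TypedA allow Γ (.aname a j (.arrow T1 T2)) (.arrow T1 T2)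
  | const {Γ c} : TypedA allow Γ (.const c) c.ty
  | fixfun {Γ T1 T2 b} (h : TypedA allow (T1 :: .arrow T1 T2 :: Γ) b T2) :
      TypedA allow Γ (.fixfun T1 T2 b) (.arrow T1 T2)
  | tuple {Γ} {es : List Expr} {Ts : List Ty} (hlen : es.length = Ts.length)
      (h : ∀ (i : Nat) (e : Expr) (T : Ty), es[i]? = some e → Ts[i]? = some T → TypedA allow Γ e T) :
      TypedA allow Γ (.tuple es) (.prod Ts)
  | prim {Γ op T} {es : List Expr} {Ts : List Ty} (hty : PrimTy op Ts T) (hlen : es.length = Ts.length)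
      (h : ∀ (i : Nat) (e : Expr) (T' : Ty), es[i]? = some e → Ts[i]? = some T' → TypedA allow Γ e T') :
      TypedA allow Γ (.prim op es) T
  | app {Γ e1 e2 T1 T2} (h1 : TypedA allow Γ e1 (.arrow T1 T2))
      (h2 : TypedA allow Γ e2 T1) : TypedA allow Γ (.app e1 e2) T2
  | ite {Γ b e1 e2 T} (hb : TypedA allow Γ b .bool) (h1 : TypedA allow Γ e1 T)
      (h2 : TypedA allow Γ e2 T) : TypedA allow Γ (.ite b e1 e2) T
  | letTup {Γ e b Ts T} (he : TypedA allow Γ e (.prod Ts))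
      (hb : TypedA allow (Ts ++ Γ) b T) : TypedA allow Γ (.letTup Ts.length e b) T

abbrev Typed := TypedA false
abbrev TypedN := TypedA true

/-! ## Reduction semantics -/

inductive BStep : Expr → Expr → Prop
  | beta {T1 T2 b v} (hv : IsValue v) :
      BStep (.app (.fixfun T1 T2 b) v) (Expr.inst [v, .fixfun T1 T2 b] 0 b)
  | prim {op : PrimOp} {cs : List Const} {c : Const} (h : op.eval cs = some c) :
      BStep (.prim op (cs.map Expr.const)) (.const c)
  | letTup {n vs b} (hv : ∀ v ∈ vs, IsValue v) (hlen : vs.length = n) :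
      BStep (.letTup n (.tuple vs) b) (Expr.inst vs 0 b)
  | iteT {e1 e2} : BStep (.ite (.const (.bool true)) e1 e2) e1
  | iteF {e1 e2} : BStep (.ite (.const (.bool false)) e1 e2) e2

/-- Single-hole evaluation contexts, with typed holes. -/
inductive ECtx : Type
  | hole (T : Ty)
  | tupleC (vs : List Expr) (E : ECtx) (es : List Expr)
  | primC (op : PrimOp) (vs : List Expr) (E : ECtx) (es : List Expr)
  | appL (E : ECtx) (e : Expr)
  | appR (v : Expr) (E : ECtx)
  | iteC (E : ECtx) (e1 e2 : Expr)
  | letC (n : Nat) (E : ECtx) (b : Expr)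

def ECtx.plug : ECtx → Expr → Expr
  | .hole _, e => e
  | .tupleC vs E es, e => .tuple (vs ++ E.plug e :: es)
  | .primC op vs E es, e => .prim op (vs ++ E.plug e :: es)
  | .appL E e2, e => .app (E.plug e) e2
  | .appR v E, e => .app v (E.plug e)
  | .iteC E e1 e2, e => .ite (E.plug e) e1 e2
  | .letC n E b, e => .letTup n (E.plug e) b

def ECtx.holeTy : ECtx → Ty
  | .hole T => T
  | .tupleC _ E _ => E.holeTy
  | .primC _ _ E _ => E.holeTy
  | .appL E _ => E.holeTy
  | .appR _ E => E.holeTy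
  | .iteC E _ _ => E.holeTy
  | .letC _ E _ => E.holeTy

/-- Well-formedness of evaluation contexts: everything to the left of the hole
is a value. -/
inductive ECtx.Wf : ECtx → Prop
  | hole (T) : ECtx.Wf (.hole T)
  | tupleC {vs E es} (h : ∀ v ∈ vs, IsValue v) (hE : ECtx.Wf E) :
      ECtx.Wf (.tupleC vs E es)
  | primC {op vs E es} (h : ∀ v ∈ vs, IsValue v) (hE : ECtx.Wf E) :
      ECtx.Wf (.primC op vs E es)
  | appL {E e} (hE : ECtx.Wf E) : ECtx.Wf (.appL E e)
  | appR {v E} (hv : IsValue v) (hE : ECtx.Wf E) : ECtx.Wf (.appR v E)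
  | iteC {E e1 e2} (hE : ECtx.Wf E) : ECtx.Wf (.iteC E e1 e2)
  | letC {n E b} (hE : ECtx.Wf E) : ECtx.Wf (.letC n E b)

/-- Small-step reduction `e → e'`. -/
inductive Red : Expr → Expr → Prop
  | mk {E a b} (hwf : ECtx.Wf E) (h : BStep a b) : Red (E.plug a) (E.plug b)

/-- `e ⇓`: `e` reduces to a value. -/
def Terminates (e : Expr) : Prop := ∃ v, IsValue v ∧ Relation.ReflTransGen Red e v

/-! ## Contexts and contextual equivalence -/

/-- Multi-holed contexts `D` (with indexed, typed holes). -/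
inductive Ctx : Type
  | hole (i : Nat) (T : Ty)
  | var (n : Nat)
  | const (c : Const)
  | fixfun (T1 T2 : Ty) (D : Ctx)
  | tuple (Ds : List Ctx)
  | prim (op : PrimOp) (Ds : List Ctx)
  | app (D1 D2 : Ctx)
  | ite (D1 D2 D3 : Ctx)
  | letTup (n : Nat) (D1 D2 : Ctx)

/-- `D[e]`: fill every hole of `D` with the (closed) expression `e`. -/
def Ctx.fill : Ctx → Expr → Expr
  | .hole _ _, e => e
  | .var n, _ => .var n
  | .const c, _ => .const c
  | .fixfun T1 T2 D, e => .fixfun T1 T2 (D.fill e)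
  | .tuple Ds, e => .tuple (Ds.attach.map fun x => x.1.fill e)
  | .prim op Ds, e => .prim op (Ds.attach.map fun x => x.1.fill e)
  | .app D1 D2, e => .app (D1.fill e) (D2.fill e)
  | .ite D1 D2 D3, e => .ite (D1.fill e) (D2.fill e) (D3.fill e)
  | .letTup n D1 D2, e => .letTup n (D1.fill e) (D2.fill e)
termination_by D _ => sizeOf D
decreasing_by all_goals (simp_wf <;> first
  | omega
  | (have := List.sizeOf_lt_of_mem x.2; omega))

/-- Contextual equivalence `e1 ≅ e2` for closed expressions. -/
def CtxEquiv (e1 e2 : Expr) : Prop :=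
  ∀ D : Ctx, Typed [] (D.fill e1) .unit → Typed [] (D.fill e2) .unit →
    (Terminates (D.fill e1) ↔ Terminates (D.fill e2))

/-! ## Applicative contexts -/

/-- The diverging expression `⊥_Unit`. -/
def botUnit : Expr := .app (.fixfun .unit .unit (.app (.var 1) (.var 0))) (.const .unit)

/-- Applicative contexts `E_a ::= [·]_T | E_a v | if E_a = c then () else ⊥ | π_i(E_a)`. -/
inductive ACtx : Type
  | hole (T : Ty)
  | app (E : ACtx) (v : Expr)
  | iteEq (E : ACtx) (c : Const)
  | proj (n i : Nat) (E : ACtx)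

def ACtx.fill : ACtx → Expr → Expr
  | .hole _, e => e
  | .app E v, e => .app (E.fill e) v
  | .iteEq E c, e => .ite (.prim .eqc [E.fill e, .const c]) (.const .unit) botUnit
  | .proj n i E, e => .letTup n (E.fill e) (.var i)

/-- Well-formedness of applicative contexts: the arguments are values. -/
inductive ACtx.Wf : ACtx → Prop
  | hole (T) : ACtx.Wf (.hole T)
  | app {E v} (hv : IsValue v) (hE : ACtx.Wf E) : ACtx.Wf (.app E v)
  | iteEq {E c} (hE : ACtx.Wf E) : ACtx.Wf (.iteEq E c)
  | proj {n i E} (hE : ACtx.Wf E) : ACtx.Wf (.proj n i E)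

/-! ## The plain LTS (Figure 2) -/

/-- Abstract values: values in which every function is an abstract name.
These are the values `D[α̅]` supplied by the opponent. -/
inductive AVal : Type
  | const (c : Const)
  | name (a : Nat) (T : Ty)
  | tuple (vs : List AVal)

instance : Inhabited AVal := ⟨.const .unit⟩

def AVal.names : AVal → List Nat
  | .const _ => []
  | .name a _ => [a]
  | .tuple vs => flat (vs.attach.map fun x => x.1.names)
termination_by v => sizeOf v
decreasing_by all_goals (simp_wf <;> first
  | omega
  | (have := List.sizeOf_lt_of_mem x.2; omega))

/-- `v.toExpr j`: the expression `D[α̅^j]` denoted by an abstract value,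
annotating every abstract name with the index `j`. -/
def AVal.toExpr (j : Nat) : AVal → Expr
  | .const c => .const c
  | .name a T => .aname a j T
  | .tuple vs => .tuple (vs.attach.map fun x => x.1.toExpr j)
termination_by v => sizeOf v
decreasing_by all_goals (simp_wf <;> first
  | omega
  | (have := List.sizeOf_lt_of_mem x.2; omega))

/-- Typing of abstract values (names must be of function type). -/
inductive AValTy : AVal → Ty → Prop
  | const (c : Const) : AValTy (.const c) c.ty
  | name (a : Nat) (T1 T2 : Ty) : AValTy (.name a (.arrow T1 T2)) (.arrow T1 T2)
  | tuple {vs : List AVal} {Ts : List Ty} (hlen : vs.length = Ts.length)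
      (h : ∀ (i : Nat) (v : AVal) (T : Ty), vs[i]? = some v → Ts[i]? = some T → AValTy v T) :
      AValTy (.tuple vs) (.prod Ts)

/-- Function-free value contexts `D` with indexed, typed holes (ultimate patterns). -/
inductive VCtx : Type
  | const (c : Const)
  | hole (i : Nat) (T : Ty)
  | tuple (Ds : List VCtx)

instance : Inhabited VCtx := ⟨.const .unit⟩

/-! ### Ultimate pattern decomposition of proponent values -/

mutual
/-- Decompose a value into an ultimate pattern and the list of its functions;
the `Nat` argument/result threads the next fresh hole index. -/
def ulpAux : Expr → Nat → Option (VCtx × List Expr × Nat)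
  | .const c, n => some (.const c, [], n)
  | .fixfun T1 T2 b, n => some (.hole n (.arrow T1 T2), [.fixfun T1 T2 b], n + 1)
  | .aname a j T, n => some (.hole n T, [.aname a j T], n + 1)
  | .tuple es, n =>
      match ulpList es n with
      | some (Ds, fs, n') => some (.tuple Ds, fs, n')
      | none => none
  | _, _ => none

def ulpList : List Expr → Nat → Option (List VCtx × List Expr × Nat)
  | [], n => some ([], [], n)
  | e :: es, n =>
      match ulpAux e n with
      | some (D, fs, n') =>
          match ulpList es n' with
          | some (Ds, fs', n'') => some (D :: Ds, fs ++ fs', n'')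
          | none => none
      | none => none
end

/-- `ulp v = some (D, v̅)` is the ultimate pattern decomposition of the value `v`. -/
def ulp (v : Expr) : Option (VCtx × List Expr) :=
  match ulpAux v 0 with
  | some (D, fs, _) => some (D, fs)
  | none => none

/-! ### Moves, traces and memories -/

/-- Moves of the plain LTS: proponent calls `α̅(D)`, proponent returns
`ret(D)`, opponent calls `i(v)` and opponent returns `ret(v)`. -/
inductive Move : Type
  | pcall (a : Nat) (T : Ty) (D : VCtx)
  | pret (D : VCtx)
  | ocall (i : Nat) (v : AVal)
  | oret (v : AVal)

instance : Inhabited Move := ⟨.pret (.const .unit)⟩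

abbrev Trace := List Move

def Move.isP : Move → Bool
  | .pcall .. => true
  | .pret _ => true
  | _ => false

/-- Abstract names introduced by a move (opponent moves introduce names). -/
def Move.intros : Move → List Nat
  | .ocall _ v => v.names
  | .oret v => v.names
  | _ => []

def traceIntros (t : Trace) : List Nat := flat (t.map Move.intros)

/-- The moves extending the proponent-ending trace `t` in `M`. -/
def nextMoves (M : Set Trace) (t : Trace) : Set Move := {η | t ++ [η] ∈ M}

def EndsP (t : Trace) : Prop := ∃ t' m, t = t' ++ [m] ∧ m.isP = true

/-- Legality of a memory `M`: any proponent-ending trace has at most one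
extension in `M`, and each abstract name is introduced at most once in `M`. -/
def LegalM (M : Set Trace) : Prop :=
  (∀ t, EndsP t → ∀ η₁ η₂, η₁ ∈ nextMoves M t → η₂ ∈ nextMoves M t → η₁ = η₂) ∧
  (∀ a t₁ t₂, t₁ ∈ M → t₂ ∈ M → a ∈ traceIntros t₁ → a ∈ traceIntros t₂ →
      t₁ <+: t₂ ∨ t₂ <+: t₁) ∧
  (∀ a t, t ∈ M → (t.countP fun m => decide (a ∈ m.intros)) ≤ 1)

def MNames (M : Set Trace) : Set Nat := {a | ∃ t ∈ M, a ∈ traceIntros t}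

/-! ### Configurations -/

/-- The component `A`: a partial map from pairs (abstract name, index) to the
proponent knowledge available when the name was used. -/
abbrev AMap := Nat → Nat → Option (List Expr)

def AMap.empty : AMap := fun _ _ => none

def AMap.upd (A : AMap) (ns : List Nat) (j : Nat) (k : List Expr) : AMap :=
  fun a j' => if a ∈ ns ∧ j' = j then some k else A a j'

def AMap.names (A : AMap) : Set Nat := {a | ∃ j, (A a j).isSome}

/-- Configurations of the plain LTS: proponent `⟨A; M; K; t; e; V⟩` and
opponent `⟨A; M; K; t; V; u̅⟩`. -/
inductive Conf : Type
  | prop (A : AMap) (M : Set Trace) (K : List (Trace × ECtx)) (t : Trace)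
      (e : Expr) (V : List (List Expr))
  | opp (A : AMap) (M : Set Trace) (K : List (Trace × ECtx)) (t : Trace)
      (V : List (List Expr)) (u : List Expr)

def Conf.Mset : Conf → Set Trace
  | .prop _ M _ _ _ _ => M
  | .opp _ M _ _ _ _ => M

def Conf.Amap : Conf → AMap
  | .prop A _ _ _ _ _ => A
  | .opp A _ _ _ _ _ => A

def Conf.tr : Conf → Trace
  | .prop _ _ _ t _ _ => t
  | .opp _ _ _ t _ _ => t

/-- The abstract names of a configuration. -/
def Conf.names (C : Conf) : Set Nat :=
  AMap.names C.Amap ∪ MNames C.Mset ∪ {a | a ∈ traceIntros C.tr}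

def Conf.Initial : Conf → Prop := fun C => ∃ e, C = .prop AMap.empty ∅ [] [] e []

def Conf.Final : Conf → Prop := fun C => ∃ A M t V u, C = .opp A M [] t V u

/-- The initial configuration `C_e` of a closed expression. -/
def initConf (e : Expr) : Conf := .prop AMap.empty ∅ [] [] e []

/-! ### Transitions -/

inductive Lab : Type
  | tau
  | mv (η : Move)

inductive Step : Conf → Lab → Conf → Prop
  | propTau {A M K t e e' V} (h : Red e e') :
      Step (.prop A M K t e V) .tau (.prop A M K t e' V)
  | propRetBarb {A M t v V D vs} (hv : IsValue v) (hulp : ulp v = some (D, vs)) :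
      Step (.prop A M [] t v V) (.mv (.pret D)) (.opp A M [] [] [] vs)
  | propRet {A M K t v u V D vs} (hv : IsValue v) (hulp : ulp v = some (D, vs))
      (hK : K ≠ []) :
      Step (.prop A M K t v (u :: V)) .tau
        (.opp A (insert (t ++ [.pret D]) M) K (t ++ [.pret D]) V (u ++ vs))
  | propCall {A M K t E a j T1 T2 v V D vs u}
      (hv : IsValue v) (hulp : ulp v = some (D, vs))
      (hwf : ECtx.Wf E) (hT : E.holeTy = T2) (hA : A a j = some u) :
      Step (.prop A M K t (E.plug (.app (.aname a j (.arrow T1 T2)) v)) V) .tau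
        (.opp A (insert [Move.pcall a (.arrow T1 T2) D] M)
          ((t, E) :: K) [Move.pcall a (.arrow T1 T2) D] V (u ++ vs))
  | opRet {A M K t₀ E t V u w T' j}
      (hnext : nextMoves M t ⊆ {Move.oret w})
      (hty : AValTy w T') (hT : E.holeTy = T') (hnodup : w.names.Nodup)
      (hj : ∀ a ∈ w.names, A a j = none)
      (hleg : LegalM (insert (t ++ [Move.oret w]) M)) :
      Step (.opp A M ((t₀, E) :: K) t V u) .tau
        (.prop (A.upd w.names j u) (insert (t ++ [Move.oret w]) M) K t₀
          (E.plug (w.toExpr j)) V)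
  | opCallBarb {A M u i vi w T1 T2}
      (hi : u[i]? = some vi) (hty : TypedN [] vi (.arrow T1 T2))
      (hw : AValTy w T1) (hnodup : w.names.Nodup)
      (hfresh : ∀ a ∈ w.names, (∀ j, A a j = none) ∧ a ∉ MNames M) :
      Step (.opp A M [] [] [] u) (.mv (.ocall i w))
        (.prop (A.upd w.names 0 []) M [] [] (.app vi (w.toExpr 0)) [])
  | opCall {A M K t V u i vi w T1 T2 j}
      (hK : K ≠ [])
      (hnext : nextMoves M t ⊆ {Move.ocall i w})
      (hi : u[i]? = some vi) (hty : TypedN [] vi (.arrow T1 T2))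
      (hw : AValTy w T1) (hnodup : w.names.Nodup)
      (hj : ∀ a ∈ w.names, A a j = none)
      (hleg : LegalM (insert (t ++ [Move.ocall i w]) M)) :
      Step (.opp A M K t V u) .tau
        (.prop (A.upd w.names j u) (insert (t ++ [Move.ocall i w]) M) K
          (t ++ [Move.ocall i w]) (.app vi (w.toExpr j)) (u :: V))

/-- `C ⤇ C'`: reflexive-transitive closure of τ-transitions. -/
def Taus : Conf → Conf → Prop := Relation.ReflTransGen (fun C C' => Step C .tau C')

/-- `C ⤇^η C'`. -/
def WStep (C : Conf) (η : Move) (C' : Conf) : Prop :=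
  ∃ C₁ C₂, Taus C C₁ ∧ Step C₁ (.mv η) C₂ ∧ Taus C₂ C'

/-- `C ⤇^{η₁ η₂} C'`. -/
def WStep2 (C : Conf) (η₁ η₂ : Move) (C' : Conf) : Prop :=
  ∃ C₁, WStep C η₁ C₁ ∧ WStep C₁ η₂ C'

/-- `C ⤇^t C'` for a trace `t` of visible moves. -/
inductive WTrace : Conf → Trace → Conf → Prop
  | nil {C C'} (h : Taus C C') : WTrace C [] C'
  | cons {C C₁ C' η t} (h : WStep C η C₁) (ht : WTrace C₁ t C') : WTrace C (η :: t) C'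

/-- The semantics `⟦e⟧` of a closed expression. -/
def Sem (e : Expr) : Set (Trace × Set Trace) :=
  {p | ∃ A t' V v, WTrace (initConf e) p.1 (.opp A p.2 [] t' V v)}

/-! ### Weak (bi-)simulation -/

def IsWeakSim (R : Conf → Conf → Prop) : Prop :=
  ∀ C1 C2, R C1 C2 →
    (C1.Initial → ∀ D' C1', WStep C1 (.pret D') C1' →
        ∃ C2', WStep C2 (.pret D') C2' ∧ R C1' C2') ∧
    (C1.Final → ∀ i w D' C1', (∀ a ∈ AVal.names w, a ∉ C2.names) →
        WStep2 C1 (.ocall i w) (.pret D') C1' →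
        ∃ C2', WStep2 C2 (.ocall i w) (.pret D') C2' ∧ R C1' C2') ∧
    C2.Mset ⊆ C1.Mset

/-- Weak bisimilarity of configurations. -/
def Bisim (C1 C2 : Conf) : Prop :=
  ∃ R : Conf → Conf → Prop,
    IsWeakSim R ∧ IsWeakSim (fun a b => R b a) ∧ R C1 C2

/-- `e1 ≈ e2`: bisimilarity of closed expressions. -/
def ExprBisim (e1 e2 : Expr) : Prop := Bisim (initConf e1) (initConf e2)

/-! ## The game-LTS (Figure 3) -/

/-- Moves of the game-LTS: proponent calls `α̅(D)[β̅]`, proponent returns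
`ret(D)[β̅]`, opponent calls `β̅(D)[α̅]`, opponent returns `ret(D)[α̅]`.
Opponent names `α` and proponent names `β` are taken from two (disjoint)
copies of `ℕ`. -/
inductive GMove : Type
  | pcall (a : Nat) (D : VCtx) (bs : List Nat)
  | pret (D : VCtx) (bs : List Nat)
  | ocall (b : Nat) (D : VCtx) (as : List Nat)
  | oret (D : VCtx) (as : List Nat)

instance : Inhabited GMove := ⟨.pret (.const .unit) []⟩

abbrev GTrace := List GMove

def GMove.isP : GMove → Bool
  | .pcall .. => true
  | .pret .. => true
  | _ => false

def GMove.isO (m : GMove) : Bool := !m.isP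

def GMove.isCall : GMove → Bool
  | .pcall .. => true
  | .ocall .. => true
  | _ => false

/-- Names introduced by a move. -/
def GMove.intro : GMove → List Nat
  | .pcall _ _ bs => bs
  | .pret _ bs => bs
  | .ocall _ _ as => as
  | .oret _ as => as

def GMove.introO (m : GMove) : List Nat := if m.isP then [] else m.intro
def GMove.introP (m : GMove) : List Nat := if m.isP then m.intro else []

/-- Proponent names occurring in a move. -/
def GMove.pns : GMove → List Nat
  | .pcall _ _ bs => bs
  | .pret _ bs => bs
  | .ocall b _ _ => [b]
  | .oret _ _ => []

/-- Opponent names occurring in a move. -/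
def GMove.ons : GMove → List Nat
  | .pcall a _ _ => [a]
  | .pret _ _ => []
  | .ocall _ _ as => as
  | .oret _ as => as

def GTrace.pns (t : GTrace) : List Nat := flat (t.map GMove.pns)
def GTrace.ons (t : GTrace) : List Nat := flat (t.map GMove.ons)

/-! ### Complete traces, legal traces -/

mutual
/-- The grammar `CT_OP`. -/
inductive CTOP : GTrace → Prop
  | nil : CTOP []
  | cons {b D as t1 D' bs t2} (h1 : CTPO t1) (h2 : CTOP t2) :
      CTOP (.ocall b D as :: t1 ++ .pret D' bs :: t2)

/-- The grammar `CT_PO`. -/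
inductive CTPO : GTrace → Prop
  | nil : CTPO []
  | cons {a D bs t1 D' as t2} (h1 : CTOP t1) (h2 : CTPO t2) :
      CTPO (.pcall a D bs :: t1 ++ .oret D' as :: t2)
end

/-- Complete traces of shape `CT_P`. -/
def CTP (t : GTrace) : Prop := ∃ D bs t', t = .pret D bs :: t' ∧ CTOP t'

/-- Complete traces of shape `CT_O`. -/
def CTO (t : GTrace) : Prop := ∃ D as t', t = .oret D as :: t' ∧ CTPO t'

/-- Complete traces. -/
def CompleteCT (t : GTrace) : Prop := CTP t ∨ CTO t

/-- Traces: prefixes of complete traces. -/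
def IsGTrace (t : GTrace) : Prop := ∃ t', t <+: t' ∧ CompleteCT t'

/-- The name conditions for legality of traces. -/
def LegalConds (t : GTrace) : Prop :=
  ∀ t₁ m t₂, t = t₁ ++ m :: t₂ →
    m.intro.Nodup ∧
    match m with
    | .pcall a _ bs => (∀ b ∈ bs, b ∉ GTrace.pns t₁) ∧ ∃ m' ∈ t₁, a ∈ GMove.introO m'
    | .pret _ bs => ∀ b ∈ bs, b ∉ GTrace.pns t₁
    | .ocall b _ as => (∀ a ∈ as, a ∉ GTrace.ons t₁) ∧ ∃ m' ∈ t₁, b ∈ GMove.introP m'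
    | .oret _ as => ∀ a ∈ as, a ∉ GTrace.ons t₁

/-- Legal traces. -/
def GLegal (t : GTrace) : Prop := IsGTrace t ∧ LegalConds t

/-! ### Justifiers and views -/

/-- Index of the move of `t` introducing the opponent name `a`. -/
def introIdxO (t : GTrace) (a : Nat) : Option Nat :=
  (List.range t.length).find? fun j => decide (a ∈ GMove.introO t[j]!)

/-- Index of the move of `t` introducing the proponent name `b`. -/
def introIdxP (t : GTrace) (b : Nat) : Option Nat :=
  (List.range t.length).find? fun j => decide (b ∈ GMove.introP t[j]!)

/-- The stack of indices of currently open (unanswered) calls of `t`. -/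
def pendingAux : List GMove → Nat → List Nat → List Nat
  | [], _, st => st
  | m :: rest, k, st =>
      pendingAux rest (k + 1) (if m.isCall then k :: st else st.tail)

def pending (t : GTrace) : List Nat := pendingAux t 0 []

/-- The justifier of the move at index `k` of `t`: for calls, the move
introducing the called name; for returns, the open call being answered. -/
def justifier (t : GTrace) (k : Nat) : Option Nat :=
  match t[k]? with
  | some (.pcall a _ _) => introIdxO (t.take k) a
  | some (.ocall b _ _) => introIdxP (t.take k) b
  | some (.pret _ _) => (pending (t.take k)).head?
  | some (.oret _ _) => (pending (t.take k)).head?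
  | none => none

/-- The P-view `⌈t⌉`. -/
def pview (t : GTrace) : GTrace :=
  if h : t.length ≤ 1 then t
  else
    if (t[t.length - 1]!).isP then pview (t.take (t.length - 1)) ++ [t[t.length - 1]!]
    else
      match justifier t (t.length - 1) with
      | some j =>
          pview (t.take (min j (t.length - 1))) ++
            [t[min j (t.length - 1)]!, t[t.length - 1]!]
      | none => [t[t.length - 1]!]
termination_by t.length
decreasing_by all_goals (simp [List.length_take]; omega)

/-- The O-view `⌊t⌋`. -/
def oview (t : GTrace) : GTrace :=
  if h : t.length ≤ 1 then t
  else
    if (t[t.length - 1]!).isO then oview (t.take (t.length - 1)) ++ [t[t.length - 1]!]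
    else
      match justifier t (t.length - 1) with
      | some j =>
          oview (t.take (min j (t.length - 1))) ++
            [t[min j (t.length - 1)]!, t[t.length - 1]!]
      | none => [t[t.length - 1]!]
termination_by t.length
decreasing_by all_goals (simp [List.length_take]; omega)

/-! ### Name permutations -/

/-- Finite-support name permutations respecting O/P-ownership of names. -/
structure NPerm : Type where
  pO : Equiv.Perm ℕ
  pP : Equiv.Perm ℕ
  finO : Set.Finite {a | pO a ≠ a}
  finP : Set.Finite {b | pP b ≠ b}

def NPerm.actM (π : NPerm) : GMove → GMove
  | .pcall a D bs => .pcall (π.pO a) D (bs.map π.pP)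
  | .pret D bs => .pret D (bs.map π.pP)
  | .ocall b D as => .ocall (π.pP b) D (as.map π.pO)
  | .oret D as => .oret D (as.map π.pO)

def NPerm.actT (π : NPerm) (t : GTrace) : GTrace := t.map π.actM

/-- `t ∼ t'`: equality of traces up to name permutation. -/
def GEquiv (t t' : GTrace) : Prop := ∃ π : NPerm, t' = π.actT t

/-! ### Plays -/

/-- Visibility: the justifier of each move lies in the relevant view of the
preceding trace. -/
def Visibility (t : GTrace) : Prop :=
  ∀ k, k < t.length → ∀ j, justifier t k = some j →
    ((t[k]!).isP → t[j]! ∈ pview (t.take k)) ∧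
    ((t[k]!).isO → t[j]! ∈ oview (t.take k))

/-- Innocence: same-player moves following view-equivalent prefixes are
equivalent extensions. -/
def Innocence (t : GTrace) : Prop :=
  ∀ t₁ t₂ m₁ m₂, t₁ ++ [m₁] <+: t → t₂ ++ [m₂] <+: t →
    ((m₁.isP → m₂.isP → GEquiv (pview t₁) (pview t₂) →
        GEquiv (pview (t₁ ++ [m₁])) (pview (t₂ ++ [m₂]))) ∧
     (m₁.isO → m₂.isO → GEquiv (oview t₁) (oview t₂) →
        GEquiv (oview (t₁ ++ [m₁])) (oview (t₂ ++ [m₂]))))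

/-- Plays: legal traces satisfying visibility and innocence. -/
def Play (t : GTrace) : Prop := GLegal t ∧ Visibility t ∧ Innocence t

/-- `PVs(t)`: P-views of prefixes of `t`, up to permutation. -/
def PVs (t : GTrace) : Set GTrace :=
  {s | ∃ (t' : GTrace) (π : NPerm), t' <+: t ∧ s = π.actT (pview t')}

/-- `OVs(t)`: O-views of prefixes of `t`, up to permutation. -/
def OVs (t : GTrace) : Set GTrace :=
  {s | ∃ (t' : GTrace) (π : NPerm), t' <+: t ∧ s = π.actT (oview t')}

/-! ### Top-level moves and top-linearity -/

/-- The top-level moves (indices) of a P-starting play. -/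
inductive TopLevelIdx (t : GTrace) : Nat → Prop
  | init (h0 : 0 < t.length) (h : ∃ D bs, t[0]! = GMove.pret D bs) : TopLevelIdx t 0
  | ocall {k j : Nat} (hk : k < t.length) (h : ∃ b D as, t[k]! = GMove.ocall b D as)
      (hj : justifier t k = some j) (htl : TopLevelIdx t j) : TopLevelIdx t k
  | pret {k j : Nat} (hk : k < t.length) (h : ∃ D bs, t[k]! = GMove.pret D bs)
      (h0 : 0 < k) (hj : justifier t k = some j) (htl : TopLevelIdx t j) :
      TopLevelIdx t k

/-- Top-linearity: every top-level O-move is justified by the immediately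
preceding P-move. -/
def TopLinear (t : GTrace) : Prop :=
  ∀ k, k < t.length → TopLevelIdx t k → (∃ b D as, t[k]! = GMove.ocall b D as) →
    justifier t k = some (k - 1)

/-! ### Game configurations and transitions -/

/-- `A`: map from opponent names to the proponent names available at their
introduction. -/
abbrev OMap := Nat → Option (List Nat)

def OMap.empty : OMap := fun _ => none

def OMap.upd (A : OMap) (ns : List Nat) (k : List Nat) : OMap :=
  fun a => if a ∈ ns then some k else A a

/-- `κ`: concretion map from proponent names to values decorated with the
opponent names available to them. -/
abbrev PMap := Nat → Option (Expr × List Nat)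

def PMap.empty : PMap := fun _ => none

def PMap.upd (κ : PMap) (bs : List Nat) (vs : List Expr) (as : List Nat) : PMap :=
  fun b =>
    match (bs.zip vs).lookup b with
    | some v => some (v, as)
    | none => κ b

/-- Game configurations: proponent `⟨A; κ; K; t; e; V⟩[α̅]` and opponent
`⟨A; κ; K; t; V; β̅⟩`. -/
inductive GConf : Type
  | prop (A : OMap) (κ : PMap) (K : List (ECtx × List Nat)) (t : GTrace)
      (e : Expr) (V : List (List Nat)) (as : List Nat)
  | opp (A : OMap) (κ : PMap) (K : List (ECtx × List Nat)) (t : GTrace)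
      (V : List (List Nat)) (bs : List Nat)

def GConf.Amap : GConf → OMap
  | .prop A _ _ _ _ _ _ => A
  | .opp A _ _ _ _ _ => A

def GConf.kmap : GConf → PMap
  | .prop _ κ _ _ _ _ _ => κ
  | .opp _ κ _ _ _ _ => κ

def GConf.exprOf : GConf → Option Expr
  | .prop _ _ _ _ e _ _ => some e
  | .opp _ _ _ _ _ _ => none

/-- `(D, α̅) ∈ ulpatt(T)`: `D` is a function-free value context whose holes,
filled in order with the distinct names `α̅` at the holes' (function) types,
yield a value of type `T`. -/
def VCtx.holeTys : VCtx → List Ty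
  | .const _ => []
  | .hole _ T => [T]
  | .tuple Ds => flat (Ds.attach.map fun x => x.1.holeTys)
termination_by D => sizeOf D
decreasing_by all_goals (simp_wf <;> first
  | omega
  | (have := List.sizeOf_lt_of_mem x.2; omega))

inductive VCtxTy : VCtx → Ty → Prop
  | const (c : Const) : VCtxTy (.const c) c.ty
  | hole (i : Nat) {T1 T2 : Ty} : VCtxTy (.hole i (.arrow T1 T2)) (.arrow T1 T2)
  | tuple {Ds : List VCtx} {Ts : List Ty} (hlen : Ds.length = Ts.length)
      (h : ∀ (i : Nat) (D : VCtx) (T : Ty), Ds[i]? = some D → Ts[i]? = some T →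
        VCtxTy D T) : VCtxTy (.tuple Ds) (.prod Ts)

def UlpT (T : Ty) (D : VCtx) (ns : List Nat) : Prop :=
  VCtxTy D T ∧ ns.length = D.holeTys.length ∧ ns.Nodup

mutual
/-- Fill the holes of `D`, in order, with the names `ns` (at index `j`);
returns the expression together with the unused names. -/
def VCtx.fillAux (j : Nat) : VCtx → List Nat → Expr × List Nat
  | .const c, ns => (.const c, ns)
  | .hole _ T, [] => (.const .unit, [])
  | .hole _ T, n :: ns => (.aname n j T, ns)
  | .tuple Ds, ns =>
      match fillList j Ds ns with
      | (es, ns') => (.tuple es, ns')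

def fillList (j : Nat) : List VCtx → List Nat → List Expr × List Nat
  | [], ns => ([], ns)
  | D :: Ds, ns =>
      match VCtx.fillAux j D ns with
      | (e, ns') =>
          match fillList j Ds ns' with
          | (es, ns'') => (e :: es, ns'')
end

/-- `D[α̅]` as an expression (with name index `j`, by default `0`). -/
def VCtx.fill (D : VCtx) (ns : List Nat) (j : Nat := 0) : Expr :=
  (VCtx.fillAux j D ns).1

/-- The function `next_O(t)` imposing innocence on opponent moves. -/
def GNextO (t : GTrace) : Set GMove :=
  {m | ∃ (π : NPerm) (t' : GTrace) (o : GMove), t' ++ [o] <+: t ∧ o.isO = true ∧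
    oview t = NPerm.actT π (oview t') ∧ m = π.actM o ∧ Play (t ++ [m])}

/-- `next_O(t) ⊆⋆ [m]`. -/
def NextOStar (t : GTrace) (m : GMove) : Prop := m ∈ GNextO t ∨ GNextO t = ∅

inductive GLab : Type
  | tau
  | mv (m : GMove)

inductive GStep : GConf → GLab → GConf → Prop
  | propTau {A κ K t e e' V as} (h : Red e e') :
      GStep (.prop A κ K t e V as) .tau (.prop A κ K t e' V as)
  | propRet {A κ K t v V as bs' D vs bs}
      (hv : IsValue v) (hulp : ulp v = some (D, vs))
      (hlen : bs.length = vs.length) (hnodup : bs.Nodup)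
      (hfresh : ∀ b ∈ bs, κ b = none) :
      GStep (.prop A κ K t v (bs' :: V) as) (.mv (.pret D bs))
        (.opp A (κ.upd bs vs as) K (t ++ [GMove.pret D bs]) V (bs' ++ bs))
  | propApp {A κ K t E a T1 T2 v V as bs' D vs bs}
      (hv : IsValue v) (hulp : ulp v = some (D, vs))
      (hwf : ECtx.Wf E) (hT : E.holeTy = T2)
      (hA : A a = some bs')
      (hlen : bs.length = vs.length) (hnodup : bs.Nodup)
      (hfresh : ∀ b ∈ bs, κ b = none) :
      GStep (.prop A κ K t (E.plug (.app (.aname a 0 (.arrow T1 T2)) v)) V as)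
        (.mv (.pcall a D bs))
        (.opp A (κ.upd bs vs as) ((E, as) :: K) (t ++ [GMove.pcall a D bs]) V
          (bs' ++ bs))
  | opRet {A κ K E as' t V bs T' D as₂}
      (hnext : NextOStar t (.oret D as₂))
      (hU : UlpT T' D as₂) (hT : E.holeTy = T')
      (hfresh : ∀ a ∈ as₂, A a = none) :
      GStep (.opp A κ ((E, as') :: K) t V bs) (.mv (.oret D as₂))
        (.prop (A.upd as₂ bs) κ K (t ++ [GMove.oret D as₂])
          (E.plug (D.fill as₂)) V (as' ++ as₂))
  | opApp {A κ K t V bs b v as' T1 T2 D as₂}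
      (hnext : NextOStar t (.ocall b D as₂))
      (hmem : b ∈ bs) (hκ : κ b = some (v, as'))
      (hty : TypedN [] v (.arrow T1 T2))
      (hU : UlpT T1 D as₂)
      (hfresh : ∀ a ∈ as₂, A a = none) :
      GStep (.opp A κ K t V bs) (.mv (.ocall b D as₂))
        (.prop (A.upd as₂ bs) κ K (t ++ [GMove.ocall b D as₂])
          (.app v (D.fill as₂)) (bs :: V) (as' ++ as₂))

/-- The P-initial configuration `C_e`. -/
def GInitP (e : Expr) : GConf := .prop OMap.empty PMap.empty [] [] e [[]] []

/-- The O-initial configuration `C_E`. -/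
def GInitO (E : ECtx) : GConf := .opp OMap.empty PMap.empty [(E, [])] [] [] []

def GConf.IsInitial (C : GConf) : Prop := (∃ e, C = GInitP e) ∨ ∃ E, C = GInitO E

def GConf.PFinal (C : GConf) : Prop :=
  ∃ A κ t as, C = .prop A κ [] t (.const .unit) [] as

def GConf.OFinal (C : GConf) : Prop := ∃ A κ t bs, C = .opp A κ [] t [] bs

/-- `C ↠^t C'`: multi-step transition whose move labels concatenate to `t`. -/
inductive GMulti : GConf → GTrace → GConf → Prop
  | refl {C} : GMulti C [] C
  | tau {C C₁ t C'} (h : GStep C .tau C₁) (ht : GMulti C₁ t C') : GMulti C t C'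
  | mv {C C₁ m t C'} (h : GStep C (.mv m) C₁) (ht : GMulti C₁ t C') :
      GMulti C (m :: t) C'

/-- The traces produced by the game-LTS from `C`. -/
def GTr (C : GConf) : Set GTrace := {t | ∃ C', GMulti C t C'}

/-- `CP(C)`: the complete plays produced by the game-LTS from `C`. -/
def CP (C : GConf) : Set GTrace := {t | t ∈ GTr C ∧ CompleteCT t}

/-- `CP⁺(C)` for O-initial `C`. -/
def CPplus (C : GConf) : Set GTrace :=
  {s | ∃ t C', GMulti C t C' ∧ C'.PFinal ∧ s = t ++ [GMove.pret (.const .unit) []]}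

/-- `OVs(C)`. -/
def OVsC (C : GConf) : Set (Set GTrace) := {S | ∃ t ∈ CP C, S = OVs t}

/-- `OVTL(C)`. -/
def OVTL (C : GConf) : Set (Set GTrace) :=
  {S | ∃ t ∈ CP C, TopLinear t ∧ S = OVs t}

/-! ### Name permutation action on configurations -/

def NPerm.actE (π : NPerm) : Expr → Expr
  | .var n => .var n
  | .aname a j T => .aname (π.pO a) j T
  | .const c => .const c
  | .fixfun T1 T2 b => .fixfun T1 T2 (π.actE b)
  | .tuple es => .tuple (es.attach.map fun x => π.actE x.1)
  | .prim op es => .prim op (es.attach.map fun x => π.actE x.1)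
  | .app e1 e2 => .app (π.actE e1) (π.actE e2)
  | .ite b e1 e2 => .ite (π.actE b) (π.actE e1) (π.actE e2)
  | .letTup n e b => .letTup n (π.actE e) (π.actE b)
termination_by e => sizeOf e
decreasing_by all_goals (simp_wf <;> first
  | omega
  | (have := List.sizeOf_lt_of_mem x.2; omega))

def NPerm.actEC (π : NPerm) : ECtx → ECtx
  | .hole T => .hole T
  | .tupleC vs E es => .tupleC (vs.map π.actE) (π.actEC E) (es.map π.actE)
  | .primC op vs E es => .primC op (vs.map π.actE) (π.actEC E) (es.map π.actE)
  | .appL E e => .appL (π.actEC E) (π.actE e)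
  | .appR v E => .appR (π.actE v) (π.actEC E)
  | .iteC E e1 e2 => .iteC (π.actEC E) (π.actE e1) (π.actE e2)
  | .letC n E b => .letC n (π.actEC E) (π.actE b)

def NPerm.actOMap (π : NPerm) (A : OMap) : OMap :=
  fun a => (A (π.pO.symm a)).map fun bs => bs.map π.pP

def NPerm.actPMap (π : NPerm) (κ : PMap) : PMap :=
  fun b => (κ (π.pP.symm b)).map fun p => (π.actE p.1, p.2.map π.pO)

def NPerm.actK (π : NPerm) (K : List (ECtx × List Nat)) : List (ECtx × List Nat) :=
  K.map fun p => (π.actEC p.1, p.2.map π.pO)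

def NPerm.actConf (π : NPerm) : GConf → GConf
  | .prop A κ K t e V as =>
      .prop (π.actOMap A) (π.actPMap κ) (π.actK K) (π.actT t) (π.actE e)
        (V.map fun u => u.map π.pP) (as.map π.pO)
  | .opp A κ K t V bs =>
      .opp (π.actOMap A) (π.actPMap κ) (π.actK K) (π.actT t)
        (V.map fun u => u.map π.pP) (bs.map π.pP)

/-! ### Duality and composition -/

/-- Partial bijections between opponent and proponent names. -/
structure PBij : Type where
  f : Nat → Option Nat
  g : Nat → Option Nat
  fg : ∀ a b, f a = some b ↔ g b = some a

def PBij.apF (φ : PBij) (a : Nat) : Nat := (φ.f a).getD 0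
def PBij.apG (φ : PBij) (b : Nat) : Nat := (φ.g b).getD 0

/-- The dual of a move with respect to `φ`. -/
def PBij.dualM (φ : PBij) : GMove → GMove
  | .pcall a D bs => .ocall (φ.apF a) D (bs.map φ.apG)
  | .pret D bs => .oret D (bs.map φ.apG)
  | .ocall b D as => .pcall (φ.apG b) D (as.map φ.apF)
  | .oret D as => .pret D (as.map φ.apF)

/-- The dual trace `t̄^φ`. -/
def PBij.dualT (φ : PBij) (t : GTrace) : GTrace := t.map φ.dualM

/-- All names of `t` lie in `dom(φ) ∪ rng(φ)`. -/
def PBij.DefinedOn (φ : PBij) (t : GTrace) : Prop :=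
  (∀ a ∈ GTrace.ons t, (φ.f a).isSome) ∧ ∀ b ∈ GTrace.pns t, (φ.g b).isSome

/-! ## The extended game-LTS (initialisation moves) -/

/-- Extended moves: initialisation moves `?(D)[α̅]` together with game moves. -/
inductive EMove : Type
  | init (D : VCtx) (as : List Nat)
  | g (m : GMove)

instance : Inhabited EMove := ⟨.g default⟩

abbrev ETrace := List EMove

/-- Translation of extended moves to game moves (used to transport the
justification structure: the initialisation move introduces `α̅`). -/
def EMove.toG : EMove → GMove
  | .init D as => .oret D as
  | .g m => m

def ETrace.toG (t : ETrace) : GTrace := t.map EMove.toG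

def EMove.isP (m : EMove) : Bool := m.toG.isP
def EMove.isO (m : EMove) : Bool := !m.isP

/-- Extended complete traces `?(D)[α̅]·CT_P`. -/
def ECompleteT (t : ETrace) : Prop :=
  ∃ D as rest, t = EMove.init D as :: rest.map EMove.g ∧ CTP rest

/-- Justifiers in extended traces: the second move is justified by the
initialisation move. -/
def ejustifier (t : ETrace) (k : Nat) : Option Nat :=
  match k, t[1]? with
  | 1, some (EMove.g (GMove.pret _ _)) => some 0
  | k, _ => justifier (ETrace.toG t) k

/-- The P-view of an extended trace. -/
def epview (t : ETrace) : ETrace :=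
  if h : t.length ≤ 1 then t
  else
    if (t[t.length - 1]!).isP then epview (t.take (t.length - 1)) ++ [t[t.length - 1]!]
    else
      match ejustifier t (t.length - 1) with
      | some j =>
          epview (t.take (min j (t.length - 1))) ++
            [t[min j (t.length - 1)]!, t[t.length - 1]!]
      | none => [t[t.length - 1]!]
termination_by t.length
decreasing_by all_goals (simp [List.length_take]; omega)

/-- The O-view of an extended trace. -/
def eoview (t : ETrace) : ETrace :=
  if h : t.length ≤ 1 then t
  else
    if (t[t.length - 1]!).isO then eoview (t.take (t.length - 1)) ++ [t[t.length - 1]!]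
    else
      match ejustifier t (t.length - 1) with
      | some j =>
          eoview (t.take (min j (t.length - 1))) ++
            [t[min j (t.length - 1)]!, t[t.length - 1]!]
      | none => [t[t.length - 1]!]
termination_by t.length
decreasing_by all_goals (simp [List.length_take]; omega)

/-- Legality of extended traces. -/
def ELegal (t : ETrace) : Prop :=
  (∃ t', t <+: t' ∧ ECompleteT t') ∧ LegalConds (ETrace.toG t)

def EVisibility (t : ETrace) : Prop :=
  ∀ k, k < t.length → ∀ j, ejustifier t k = some j →
    ((t[k]!).isP → t[j]! ∈ epview (t.take k)) ∧
    ((t[k]!).isO → t[j]! ∈ eoview (t.take k))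

def NPerm.actEM (π : NPerm) : EMove → EMove
  | .init D as => .init D (as.map π.pO)
  | .g m => .g (π.actM m)

def NPerm.actET (π : NPerm) (t : ETrace) : ETrace := t.map π.actEM

/-- Equality of extended traces up to name permutation. -/
def EEquiv (t t' : ETrace) : Prop := ∃ π : NPerm, t' = π.actET t

def EInnocence (t : ETrace) : Prop :=
  ∀ t₁ t₂ m₁ m₂, t₁ ++ [m₁] <+: t → t₂ ++ [m₂] <+: t →
    ((m₁.isP → m₂.isP → EEquiv (epview t₁) (epview t₂) →
        EEquiv (epview (t₁ ++ [m₁])) (epview (t₂ ++ [m₂]))) ∧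
     (m₁.isO → m₂.isO → EEquiv (eoview t₁) (eoview t₂) →
        EEquiv (eoview (t₁ ++ [m₁])) (eoview (t₂ ++ [m₂]))))

/-- Extended plays. -/
def EPlay (t : ETrace) : Prop := ELegal t ∧ EVisibility t ∧ EInnocence t

/-- Extended configurations: `⟨Δ ⊢ e : T⟩` or a game configuration. -/
inductive EConf : Type
  | start (Γ : List Ty) (e : Expr) (T : Ty)
  | run (C : GConf)

/-- The extended transition relation (rule Init plus the game-LTS moves). -/
inductive EStep : EConf → EMove → EConf → Prop
  | init {Γ e T Ds as} (hU : UlpT (.prod Γ) (.tuple Ds) as) :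
      EStep (.start Γ e T) (.init (.tuple Ds) as)
        (.run (.prop (OMap.upd OMap.empty as []) PMap.empty [] []
          (Expr.inst (fillList 0 Ds as).1 0 e) [[]] as))
  | step {C m C'} (h : GStep C (.mv m) C') : EStep (.run C) (.g m) (.run C')

inductive EMulti : EConf → ETrace → EConf → Prop
  | refl {C} : EMulti C [] C
  | tau {C C₁ t C'} (h : GStep C .tau C₁) (ht : EMulti (.run C₁) t C') :
      EMulti (.run C) t C'
  | mv {C C₁ m t C'} (h : EStep C m C₁) (ht : EMulti C₁ t C') : EMulti C (m :: t) C'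

/-- `CEP(Δ ⊢ e : T)`: complete extended plays produced from `⟨Δ ⊢ e : T⟩`. -/
def CEP (Γ : List Ty) (e : Expr) (T : Ty) : Set ETrace :=
  {t | ECompleteT t ∧ ∃ C', EMulti (.start Γ e T) t C'}

/-- `EPVs(Δ ⊢ e : T)`: even-length P-views of prefixes of complete extended
plays of `e`. -/
def EPVs (Γ : List Ty) (e : Expr) (T : Ty) : Set ETrace :=
  {s | ∃ t ∈ CEP Γ e T, ∃ t', t' <+: t ∧ t'.length % 2 = 0 ∧ s = epview t'}

/-! ### Viewfunctions -/

/-- Viewfunctions: sets of extended plays that are P-views, even-prefix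
closed, closed under name permutations, and deterministic. -/
structure IsViewFn (F : Set ETrace) : Prop where
  plays : ∀ t ∈ F, EPlay t
  views : ∀ t ∈ F, epview t = t
  prefixClosed : ∀ t ∈ F, ∀ t', t' <+: t → t'.length % 2 = 0 → t' ∈ F
  permClosed : ∀ t ∈ F, ∀ π : NPerm, π.actET t ∈ F
  det : ∀ t m₁ m₂, t ++ [m₁] ∈ F → t ++ [m₂] ∈ F → EEquiv (t ++ [m₁]) (t ++ [m₂])
  initDet : ∀ m₁ t₁ m₂ t₂, (m₁ :: t₁) ∈ F → (m₂ :: t₂) ∈ F →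
    ∃ π : NPerm, m₂ = π.actEM m₁

/-- The typing `T̄ ⊢ F : T` of a viewfunction. -/
def VFTy (Ts : List Ty) (F : Set ETrace) (T : Ty) : Prop :=
  F = ∅ ∨ ∃ D0 as0 D1 bs1, [EMove.init D0 as0, EMove.g (.pret D1 bs1)] ∈ F ∧
    UlpT (.prod Ts) D0 as0 ∧ UlpT T D1 bs1

/-- The orbit `[t]` of an extended trace under name permutations. -/
def EOrbit (t : ETrace) : Set ETrace := {s | ∃ π : NPerm, s = π.actET t}

/-- Finite-orbit viewfunctions. -/
def FiniteOrbit (F : Set ETrace) : Prop :=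
  Set.Finite {S : Set ETrace | ∃ t ∈ F, S = EOrbit t}

/-- The order `Σ ≤ Σ'` on sets of sets of O-views. -/
def OVleq (S1 S2 : Set (Set GTrace)) : Prop := ∀ F ∈ S1, ∃ F' ∈ S2, F' ⊆ F

/-- `C` reaches `C'` with labels `t`, where `C'` is not immediately preceded
by a proponent configuration (the last step is an opponent move), or `C' = C`
with `t` empty. -/
def ReachOP (C : GConf) (t : GTrace) (C' : GConf) : Prop :=
  (t = [] ∧ C' = C) ∨
    ∃ C₁ t₀ m, GMulti C t₀ C₁ ∧ GStep C₁ (.mv m) C' ∧ m.isP = false ∧ t = t₀ ++ [m]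

/-!
For `⇒`, a bisimulation transports every run of `C_{e1}` ending in a final
configuration, move by move, to a run of `C_{e2}` with the same visible trace; since a weak
bisimulation relates only configurations whose memories include each other, the two memories
coincide. Opponent names fresh for the first run stay fresh for the second, because every name
in the `A`-map of the second run was either recorded in its memory or introduced by a
top-level move that the first run also made.

For `⇐`, relate the configurations reached from `C_{e1}` and `C_{e2}` by the same visible trace
and the same memory. The LTS is deterministic except for the choice of opponent moves at
τ-steps and of the indices of abstract names; the opponent choices are fixed by any legal
memory containing both runs' memories (a proponent-ending trace has at most one extension),
and the indices only matter up to renaming. So the run of `e2` that `⟦e1⟧ = ⟦e2⟧` provides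
for an extended trace passes, up to renaming of indices, through the configuration already
reached, and the renaming transports the last chunk of moves.
-/

@[simp] theorem flat_eq_flatten {β : Type _} : ∀ ls : List (List β), flat ls = ls.flatten
  | [] => rfl
  | l :: ls => by rw [flat, flat_eq_flatten ls, List.flatten_cons]

theorem mem_flat {β : Type _} {x : β} {ls : List (List β)} :
    x ∈ flat ls ↔ ∃ l ∈ ls, x ∈ l := by
  simp

theorem mem_flat_map {α β : Type _} {x : β} {f : α → List β} {l : List α} {a : α}
    (ha : a ∈ l) (hx : x ∈ f a) : x ∈ flat (l.map f) :=
  mem_flat.mpr ⟨f a, List.mem_map_of_mem ha, hx⟩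

@[elab_as_elim, induction_eliminator]
theorem Expr.induction_on' {P : Expr → Prop} (var : ∀ n, P (.var n))
    (aname : ∀ a j T, P (.aname a j T)) (const : ∀ c, P (.const c))
    (fixfun : ∀ T1 T2 b, P b → P (.fixfun T1 T2 b))
    (tuple : ∀ es, (∀ e ∈ es, P e) → P (.tuple es))
    (prim : ∀ op es, (∀ e ∈ es, P e) → P (.prim op es))
    (app : ∀ e1 e2, P e1 → P e2 → P (.app e1 e2))
    (ite : ∀ b e1 e2, P b → P e1 → P e2 → P (.ite b e1 e2))
    (letTup : ∀ n e b, P e → P b → P (.letTup n e b)) (e : Expr) : P e :=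
  go e
where go : ∀ e, P e
  | .var n => var n
  | .aname a j T => aname a j T
  | .const c => const c
  | .fixfun T1 T2 b => fixfun T1 T2 b (go b)
  | .tuple es => tuple es fun e _ => go e
  | .prim op es => prim op es fun e _ => go e
  | .app e1 e2 => app e1 e2 (go e1) (go e2)
  | .ite b e1 e2 => ite b e1 e2 (go b) (go e1) (go e2)
  | .letTup n e b => letTup n e b (go e) (go b)

@[elab_as_elim, induction_eliminator]
theorem AVal.induction_on' {P : AVal → Prop} (const : ∀ c, P (.const c))
    (name : ∀ a T, P (.name a T)) (tuple : ∀ vs, (∀ v ∈ vs, P v) → P (.tuple vs))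
    (v : AVal) : P v :=
  go v
where go : ∀ v, P v
  | .const c => const c
  | .name a T => name a T
  | .tuple vs => tuple vs fun v _ => go v

/-! ### Renaming the indices of abstract names -/

def Expr.reindex (σ : Nat → Nat → Nat) : Expr → Expr
  | .var n => .var n
  | .aname a j T => .aname a (σ a j) T
  | .const c => .const c
  | .fixfun T1 T2 b => .fixfun T1 T2 (b.reindex σ)
  | .tuple es => .tuple (es.attach.map fun x => x.1.reindex σ)
  | .prim op es => .prim op (es.attach.map fun x => x.1.reindex σ)
  | .app e1 e2 => .app (e1.reindex σ) (e2.reindex σ)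
  | .ite b e1 e2 => .ite (b.reindex σ) (e1.reindex σ) (e2.reindex σ)
  | .letTup n e b => .letTup n (e.reindex σ) (b.reindex σ)
termination_by e => sizeOf e
decreasing_by all_goals (simp_wf <;> first
  | omega
  | (have := List.sizeOf_lt_of_mem x.2; omega))

def Expr.idxNames : Expr → List (Nat × Nat)
  | .var _ => []
  | .aname a j _ => [(a, j)]
  | .const _ => []
  | .fixfun _ _ b => b.idxNames
  | .tuple es => flat (es.attach.map fun x => x.1.idxNames)
  | .prim _ es => flat (es.attach.map fun x => x.1.idxNames)
  | .app e1 e2 => e1.idxNames ++ e2.idxNames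
  | .ite b e1 e2 => b.idxNames ++ e1.idxNames ++ e2.idxNames
  | .letTup _ e b => e.idxNames ++ b.idxNames
termination_by e => sizeOf e
decreasing_by all_goals (simp_wf <;> first
  | omega
  | (have := List.sizeOf_lt_of_mem x.2; omega))

namespace Expr

variable (σ : Nat → Nat → Nat)

@[simp] theorem reindex_var (n) : (var n).reindex σ = .var n := by simp [reindex]
@[simp] theorem reindex_aname (a j T) : (aname a j T).reindex σ = .aname a (σ a j) T := by
  simp [reindex]
@[simp] theorem reindex_const (c) : (const c).reindex σ = .const c := by simp [reindex]
@[simp] theorem reindex_fixfun (T1 T2 b) :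
    (fixfun T1 T2 b).reindex σ = .fixfun T1 T2 (b.reindex σ) := by simp [reindex]
@[simp] theorem reindex_tuple (es : List Expr) :
    (tuple es).reindex σ = .tuple (es.map (reindex σ)) := by
  rw [reindex, List.attach_map_val]
@[simp] theorem reindex_prim (op) (es : List Expr) :
    (prim op es).reindex σ = .prim op (es.map (reindex σ)) := by
  rw [reindex, List.attach_map_val]
@[simp] theorem reindex_app (e1 e2) :
    (app e1 e2).reindex σ = .app (e1.reindex σ) (e2.reindex σ) := by
  simp [reindex]
@[simp] theorem reindex_ite (b e1 e2) :
    (ite b e1 e2).reindex σ = .ite (b.reindex σ) (e1.reindex σ) (e2.reindex σ) := by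
  simp [reindex]
@[simp] theorem reindex_letTup (n e b) :
    (letTup n e b).reindex σ = .letTup n (e.reindex σ) (b.reindex σ) := by simp [reindex]

@[simp] theorem idxNames_var (n) : (var n).idxNames = [] := by simp [idxNames]
@[simp] theorem idxNames_aname (a j T) : (aname a j T).idxNames = [(a, j)] := by simp [idxNames]
@[simp] theorem idxNames_const (c) : (const c).idxNames = [] := by simp [idxNames]
@[simp] theorem idxNames_fixfun (T1 T2 b) : (fixfun T1 T2 b).idxNames = b.idxNames := by
  simp [idxNames]
@[simp] theorem idxNames_tuple (es : List Expr) :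
    (tuple es).idxNames = flat (es.map idxNames) := by
  rw [idxNames, List.attach_map_val]
@[simp] theorem idxNames_prim (op) (es : List Expr) :
    (prim op es).idxNames = flat (es.map idxNames) := by
  rw [idxNames, List.attach_map_val]
@[simp] theorem idxNames_app (e1 e2) : (app e1 e2).idxNames = e1.idxNames ++ e2.idxNames := by
  simp [idxNames]
@[simp] theorem idxNames_ite (b e1 e2) :
    (ite b e1 e2).idxNames = b.idxNames ++ e1.idxNames ++ e2.idxNames := by simp [idxNames]
@[simp] theorem idxNames_letTup (n e b) :
    (letTup n e b).idxNames = e.idxNames ++ b.idxNames := by simp [idxNames]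

variable {σ}

theorem reindex_congr {σ' : Nat → Nat → Nat} (e : Expr)
    (h : ∀ p ∈ e.idxNames, σ p.1 p.2 = σ' p.1 p.2) : e.reindex σ = e.reindex σ' := by
  induction e with
  | aname a j T => simpa using h (a, j)
  | tuple es ih | prim op es ih =>
      simp only [reindex_tuple, reindex_prim, tuple.injEq, prim.injEq, true_and]
      exact List.map_congr_left fun e he => ih e he fun p hp => h p (by simpa using ⟨e, he, hp⟩)
  | _ => simp_all

@[simp] theorem reindex_id : reindex (fun _ j => j) = id := by
  funext e
  induction e with
  | tuple es ih | prim op es ih => simpa using List.map_congr_left ih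
  | _ => simp_all

@[simp] theorem isValue_reindex (e : Expr) : IsValue (e.reindex σ) ↔ IsValue e := by
  induction e with
  | var | const => simp only [reindex_var, reindex_const]
  | aname => simp only [reindex_aname]; exact iff_of_true (.aname _ _ _) (.aname _ _ _)
  | fixfun => simp only [reindex_fixfun]; exact iff_of_true (.fixfun _ _ _) (.fixfun _ _ _)
  | tuple es ih =>
      simp only [reindex_tuple]
      constructor
      · intro h
        cases h with
        | tuple hv => exact .tuple fun e he => (ih e he).mp (hv _ (List.mem_map_of_mem he))
      · intro h
        cases h with
        | tuple hv =>
            refine .tuple fun e' he' => ?_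
            obtain ⟨e, he, rfl⟩ := List.mem_map.mp he'
            exact (ih e he).mpr (hv e he)
  | prim | app | ite | letTup =>
      simp only [reindex_prim, reindex_app, reindex_ite, reindex_letTup]
      exact iff_of_false (by rintro ⟨⟩) (by rintro ⟨⟩)

theorem inst_var (vs : List Expr) (d n : Nat) :
    (var n).inst vs d = if n < d then .var n else (vs[n - d]?).getD (.var (n - vs.length)) := by
  rw [inst]
  split
  · rfl
  · cases vs[n - d]? <;> rfl

@[simp] theorem inst_aname (vs d a j T) : (aname a j T).inst vs d = .aname a j T := by rw [inst]
@[simp] theorem inst_const (vs d c) : (const c).inst vs d = .const c := by rw [inst]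
@[simp] theorem inst_fixfun (vs d T1 T2 b) :
    (fixfun T1 T2 b).inst vs d = .fixfun T1 T2 (b.inst vs (d + 2)) := by rw [inst]
@[simp] theorem inst_tuple (vs d) (es : List Expr) :
    (tuple es).inst vs d = .tuple (es.map (inst vs d)) := by rw [inst, List.attach_map_val]
@[simp] theorem inst_prim (vs d op) (es : List Expr) :
    (prim op es).inst vs d = .prim op (es.map (inst vs d)) := by rw [inst, List.attach_map_val]
@[simp] theorem inst_app (vs d e1 e2) :
    (app e1 e2).inst vs d = .app (e1.inst vs d) (e2.inst vs d) := by rw [inst]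
@[simp] theorem inst_ite (vs d b e1 e2) :
    (ite b e1 e2).inst vs d = .ite (b.inst vs d) (e1.inst vs d) (e2.inst vs d) := by rw [inst]
@[simp] theorem inst_letTup (vs d n e b) :
    (letTup n e b).inst vs d = .letTup n (e.inst vs d) (b.inst vs (d + n)) := by rw [inst]

theorem reindex_inst (vs : List Expr) (e : Expr) (d : Nat) :
    (e.inst vs d).reindex σ = (e.reindex σ).inst (vs.map (reindex σ)) d := by
  induction e generalizing d with
  | var n =>
      simp only [inst_var, reindex_var, List.getElem?_map, List.length_map]
      split
      · simp
      · cases vs[n - d]? <;> simp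
  | tuple es ih | prim op es ih =>
      simpa using List.map_congr_left fun e he => ih e he d
  | _ => simp_all

theorem mem_idxNames_inst {vs : List Expr} {e : Expr} {d : Nat} {p : Nat × Nat}
    (hp : p ∈ (e.inst vs d).idxNames) : p ∈ e.idxNames ∨ ∃ v ∈ vs, p ∈ v.idxNames := by
  induction e generalizing d with
  | var n =>
      rw [inst_var] at hp
      split at hp
      · simp at hp
      · cases hv : vs[n - d]? with
        | none => simp [hv] at hp
        | some v => exact .inr ⟨v, List.mem_of_getElem? hv, by simpa [hv] using hp⟩
  | tuple es ih | prim op es ih =>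
      simp only [inst_tuple, inst_prim, idxNames_tuple, idxNames_prim, List.map_map,
        mem_flat, List.mem_map, Function.comp_apply] at hp ⊢
      obtain ⟨_, ⟨e, he, rfl⟩, hpe⟩ := hp
      exact (ih e he hpe).imp_left fun h => ⟨_, ⟨e, he, rfl⟩, h⟩
  | fixfun _ _ b ih => simpa using ih (by simpa using hp)
  | app e1 e2 ih1 ih2 =>
      simp only [inst_app, idxNames_app, List.mem_append] at hp ⊢
      rcases hp with hp | hp
      exacts [(ih1 hp).imp_left .inl, (ih2 hp).imp_left .inr]
  | ite b e1 e2 ihb ih1 ih2 =>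
      simp only [inst_ite, idxNames_ite, List.mem_append] at hp ⊢
      rcases hp with (hp | hp) | hp
      exacts [(ihb hp).imp_left (.inl ∘ .inl), (ih1 hp).imp_left (.inl ∘ .inr),
        (ih2 hp).imp_left .inr]
  | letTup n e b ihe ihb =>
      simp only [inst_letTup, idxNames_letTup, List.mem_append] at hp ⊢
      rcases hp with hp | hp
      exacts [(ihe hp).imp_left .inl, (ihb hp).imp_left .inr]
  | aname => simp_all
  | const => simp at hp

end Expr

namespace ECtx

def reindex (σ : Nat → Nat → Nat) : ECtx → ECtx
  | hole T => hole T
  | tupleC vs E es => tupleC (vs.map (·.reindex σ)) (E.reindex σ) (es.map (·.reindex σ))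
  | primC op vs E es => primC op (vs.map (·.reindex σ)) (E.reindex σ) (es.map (·.reindex σ))
  | appL E e => appL (E.reindex σ) (e.reindex σ)
  | appR v E => appR (v.reindex σ) (E.reindex σ)
  | iteC E e1 e2 => iteC (E.reindex σ) (e1.reindex σ) (e2.reindex σ)
  | letC n E b => letC n (E.reindex σ) (b.reindex σ)

def idxNames : ECtx → List (Nat × Nat)
  | hole _ => []
  | tupleC vs E es => flat (vs.map Expr.idxNames) ++ E.idxNames ++ flat (es.map Expr.idxNames)
  | primC _ vs E es => flat (vs.map Expr.idxNames) ++ E.idxNames ++ flat (es.map Expr.idxNames)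
  | appL E e => E.idxNames ++ e.idxNames
  | appR v E => v.idxNames ++ E.idxNames
  | iteC E e1 e2 => E.idxNames ++ e1.idxNames ++ e2.idxNames
  | letC _ E b => E.idxNames ++ b.idxNames

variable {σ : Nat → Nat → Nat}

theorem reindex_plug (E : ECtx) (x : Expr) :
    (E.plug x).reindex σ = (E.reindex σ).plug (x.reindex σ) := by
  induction E <;> simp [plug, reindex, *]

@[simp] theorem holeTy_reindex (E : ECtx) : (E.reindex σ).holeTy = E.holeTy := by
  induction E <;> simp [reindex, holeTy, *]

theorem Wf.reindex {E : ECtx} (h : E.Wf) : (E.reindex σ).Wf := by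
  induction h with
  | hole T => exact .hole T
  | tupleC hv _ ih => exact .tupleC (by simpa using hv) ih
  | primC hv _ ih => exact .primC (by simpa using hv) ih
  | appL _ ih => exact .appL ih
  | appR hv _ ih => exact .appR ((Expr.isValue_reindex _).mpr hv) ih
  | iteC _ ih => exact .iteC ih
  | letC _ ih => exact .letC ih

theorem mem_idxNames_plug {p : Nat × Nat} {E : ECtx} {x : Expr} :
    p ∈ (E.plug x).idxNames ↔ p ∈ E.idxNames ∨ p ∈ x.idxNames := by
  induction E <;> simp only [plug, idxNames, Expr.idxNames_tuple, Expr.idxNames_prim,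
    Expr.idxNames_app, Expr.idxNames_ite, Expr.idxNames_letTup, List.map_append, List.map_cons,
    flat_eq_flatten, List.flatten_append, List.flatten_cons, List.mem_append, List.not_mem_nil,
    false_or, *] <;> tauto

theorem reindex_congr {σ' : Nat → Nat → Nat} (E : ECtx)
    (h : ∀ p ∈ E.idxNames, σ p.1 p.2 = σ' p.1 p.2) : E.reindex σ = E.reindex σ' := by
  have hl : ∀ l : List Expr, (∀ p ∈ flat (l.map Expr.idxNames), σ p.1 p.2 = σ' p.1 p.2) →
      l.map (·.reindex σ) = l.map (·.reindex σ') := fun l hl =>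
    List.map_congr_left fun e he => e.reindex_congr fun p hp => hl p (mem_flat_map he hp)
  induction E with
  | hole => rfl
  | tupleC vs E es ih | primC _ vs E es ih =>
      simp only [reindex]
      rw [hl vs fun p hp => h p (List.mem_append_left _ (List.mem_append_left _ hp)),
        ih fun p hp => h p (List.mem_append_left _ (List.mem_append_right _ hp)),
        hl es fun p hp => h p (List.mem_append_right _ hp)]
  | appL E e ih | appR e E ih | letC _ E e ih =>
      simp only [reindex]
      rw [ih fun p hp => h p (by simp [idxNames, hp]),
        e.reindex_congr fun p hp => h p (by simp [idxNames, hp])]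
  | iteC E e1 e2 ih =>
      simp only [reindex]
      rw [ih fun p hp => h p (by simp [idxNames, hp]),
        e1.reindex_congr fun p hp => h p (by simp [idxNames, hp]),
        e2.reindex_congr fun p hp => h p (by simp [idxNames, hp])]

@[simp] theorem reindex_id (E : ECtx) : E.reindex (fun _ j => j) = E := by
  induction E <;> simp [reindex, *]

end ECtx

theorem BStep.reindex {σ : Nat → Nat → Nat} {a b : Expr} (h : BStep a b) :
    BStep (a.reindex σ) (b.reindex σ) := by
  cases h with
  | beta hv => simpa [Expr.reindex_inst] using BStep.beta (b := _) ((Expr.isValue_reindex _).mpr hv)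
  | prim hev => simpa [Function.comp_def] using BStep.prim hev
  | letTup hv hlen =>
      simpa [Expr.reindex_inst] using BStep.letTup (b := _) (by simpa using hv)
        (by simpa using hlen)
  | iteT => simpa using BStep.iteT
  | iteF => simpa using BStep.iteF

theorem Red.reindex {σ : Nat → Nat → Nat} {e e' : Expr} (h : Red e e') :
    Red (e.reindex σ) (e'.reindex σ) := by
  obtain ⟨hwf, hb⟩ := h
  rw [ECtx.reindex_plug, ECtx.reindex_plug]
  exact .mk hwf.reindex hb.reindex

section Ulp

variable {σ : Nat → Nat → Nat}

mutual
theorem ulpAux_reindex : ∀ (e : Expr) (n : Nat), ulpAux (e.reindex σ) n =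
    (ulpAux e n).map fun r => (r.1, r.2.1.map (·.reindex σ), r.2.2)
  | .tuple es, n => by
      have := ulpList_reindex es n
      cases h : ulpList es n <;> simp_all [ulpAux]
  | .var _, _ | .aname .., _ | .const _, _ | .fixfun .., _ | .prim .., _ | .app .., _
  | .ite .., _ | .letTup .., _ => by simp [ulpAux]

theorem ulpList_reindex : ∀ (es : List Expr) (n : Nat), ulpList (es.map (·.reindex σ)) n =
    (ulpList es n).map fun r => (r.1, r.2.1.map (·.reindex σ), r.2.2)
  | [], n => by simp [ulpList]
  | e :: es, n => by
      have he := ulpAux_reindex e n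
      cases h : ulpAux e n with
      | none => simp_all [ulpList]
      | some r =>
          have hes := ulpList_reindex es r.2.2
          cases h' : ulpList es r.2.2 <;> simp_all [ulpList]
end

theorem ulp_reindex (v : Expr) :
    ulp (v.reindex σ) = (ulp v).map fun r => (r.1, r.2.map (·.reindex σ)) := by
  have := ulpAux_reindex (σ := σ) v 0
  cases h : ulpAux v 0 <;> simp_all [ulp]

mutual
theorem idxNames_of_ulpAux : ∀ (e : Expr) (n : Nat) {D fs n'}, ulpAux e n = some (D, fs, n') →
    ∀ f ∈ fs, ∀ p ∈ f.idxNames, p ∈ e.idxNames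
  | .tuple es, n, D, fs, n', hu => by
      cases h : ulpList es n with
      | none => simp [ulpAux, h] at hu
      | some r =>
          simp only [ulpAux, h, Option.some.injEq, Prod.mk.injEq] at hu
          rw [← hu.2.1]
          simpa using idxNames_of_ulpList es n h
  | .aname .., _, _, _, _, hu | .fixfun .., _, _, _, _, hu => by
      simp only [ulpAux, Option.some.injEq, Prod.mk.injEq] at hu
      simp [← hu.2.1]
  | .const _, _, _, _, _, hu => by
      simp only [ulpAux, Option.some.injEq, Prod.mk.injEq] at hu
      simp [← hu.2.1]
  | .var _, _, _, _, _, hu | .prim .., _, _, _, _, hu | .app .., _, _, _, _, hu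
  | .ite .., _, _, _, _, hu | .letTup .., _, _, _, _, hu => by simp [ulpAux] at hu

theorem idxNames_of_ulpList : ∀ (es : List Expr) (n : Nat) {Ds fs n'},
    ulpList es n = some (Ds, fs, n') → ∀ f ∈ fs, ∀ p ∈ f.idxNames, p ∈ flat (es.map Expr.idxNames)
  | [], n, Ds, fs, n', hu => by
      simp only [ulpList, Option.some.injEq, Prod.mk.injEq] at hu
      simp [← hu.2.1]
  | e :: es, n, Ds, fs, n', hu => by
      cases h : ulpAux e n with
      | none => simp [ulpList, h] at hu
      | some r =>
          cases h' : ulpList es r.2.2 with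
          | none => simp [ulpList, h, h'] at hu
          | some r' =>
              simp only [ulpList, h, h', Option.some.injEq, Prod.mk.injEq] at hu
              rw [← hu.2.1]
              intro f hf p hp
              rcases List.mem_append.mp hf with hf | hf
              · exact mem_flat_map List.mem_cons_self (idxNames_of_ulpAux e n h f hf p hp)
              · have := idxNames_of_ulpList es r.2.2 h' f hf p hp
                simp only [List.map_cons, flat_eq_flatten, List.flatten_cons,
                  List.mem_append] at this ⊢
                exact .inr this
end

theorem idxNames_of_ulp {v : Expr} {D : VCtx} {fs : List Expr} (hu : ulp v = some (D, fs)) :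
    ∀ f ∈ fs, ∀ p ∈ f.idxNames, p ∈ v.idxNames := by
  cases h : ulpAux v 0 with
  | none => simp [ulp, h] at hu
  | some r =>
      simp only [ulp, h, Option.some.injEq, Prod.mk.injEq] at hu
      exact hu.2 ▸ idxNames_of_ulpAux v 0 h

end Ulp

theorem TypedA.reindex {σ : Nat → Nat → Nat} {allow : Bool} {Γ : List Ty} {e : Expr} {T : Ty}
    (h : TypedA allow Γ e T) : TypedA allow Γ (e.reindex σ) T := by
  induction h with
  | tuple hlen _ ih =>
      simp only [Expr.reindex_tuple]
      refine .tuple (by simpa using hlen) fun i e T hi hT => ?_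
      obtain ⟨e, he, rfl⟩ := Option.map_eq_some_iff.mp (List.getElem?_map ▸ hi)
      exact ih i e T he hT
  | prim hty hlen _ ih =>
      simp only [Expr.reindex_prim]
      refine .prim hty (by simpa using hlen) fun i e T hi hT => ?_
      obtain ⟨e, he, rfl⟩ := Option.map_eq_some_iff.mp (List.getElem?_map ▸ hi)
      exact ih i e T he hT
  | var h => simpa using TypedA.var h
  | aname h => simpa using TypedA.aname h
  | const => simpa using TypedA.const
  | fixfun _ ih => simpa using TypedA.fixfun ih
  | app _ _ ih1 ih2 => simpa using TypedA.app ih1 ih2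
  | ite _ _ _ ihb ih1 ih2 => simpa using TypedA.ite ihb ih1 ih2
  | letTup _ _ ihe ihb => simpa using TypedA.letTup ihe ihb

theorem Typed.idxNames_eq_nil {Γ : List Ty} {e : Expr} {T : Ty} (h : Typed Γ e T) :
    e.idxNames = [] := by
  induction h with
  | aname hallow => exact absurd hallow Bool.false_ne_true
  | tuple hlen _ ih | prim _ hlen _ ih =>
      simp only [Expr.idxNames_tuple, Expr.idxNames_prim, flat_eq_flatten, List.flatten_eq_nil_iff,
        List.mem_map, forall_exists_index, and_imp, forall_apply_eq_imp_iff₂]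
      intro e he
      obtain ⟨i, hi⟩ := List.mem_iff_getElem?.mp he
      have hiT : i < _ := hlen ▸ (List.getElem?_eq_some_iff.mp hi).1
      exact ih i e _ hi (List.getElem?_eq_getElem hiT)
  | _ => simp_all

namespace AVal

@[simp] theorem names_name (a : Nat) (T : Ty) : (name a T).names = [a] := by simp [names]
@[simp] theorem names_tuple (vs : List AVal) : (tuple vs).names = flat (vs.map names) := by
  rw [names, List.attach_map_val]

@[simp] theorem toExpr_const (j : Nat) (c : Const) : (const c).toExpr j = .const c := by
  simp [toExpr]
@[simp] theorem toExpr_name (j : Nat) (a : Nat) (T : Ty) : (name a T).toExpr j = .aname a j T := by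
  simp [toExpr]
@[simp] theorem toExpr_tuple (j : Nat) (vs : List AVal) :
    (tuple vs).toExpr j = .tuple (vs.map (toExpr j)) := by
  rw [toExpr, List.attach_map_val]

theorem reindex_toExpr {σ : Nat → Nat → Nat} {j j' : Nat} (w : AVal)
    (h : ∀ a ∈ w.names, σ a j = j') : (w.toExpr j).reindex σ = w.toExpr j' := by
  induction w with
  | const => simp
  | name a T => simpa using h a
  | tuple vs ih =>
      simpa using List.map_congr_left fun w hw => ih w hw fun a ha => h a (by
        simpa using ⟨w, hw, ha⟩)

theorem mem_idxNames_toExpr {j : Nat} {p : Nat × Nat} (w : AVal)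
    (hp : p ∈ (w.toExpr j).idxNames) : p.1 ∈ w.names ∧ p.2 = j := by
  induction w with
  | const => simp at hp
  | name a T => simp_all
  | tuple vs ih =>
      simp only [toExpr_tuple, Expr.idxNames_tuple, List.map_map, mem_flat, List.mem_map,
        Function.comp_apply] at hp
      obtain ⟨_, ⟨w, hw, rfl⟩, hpw⟩ := hp
      exact ⟨by simpa using ⟨w, hw, (ih w hw hpw).1⟩, (ih w hw hpw).2⟩

end AVal

/-! ### Determinism of reduction and of proponent steps -/

namespace Expr

def IsCall (h : Expr) : Prop :=
  ∃ a j T1 T2 v, h = .app (.aname a j (.arrow T1 T2)) v ∧ IsValue v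

/-- Redexes and abstract calls: what the proponent acts on in evaluation position. -/
def IsHead (h : Expr) : Prop := (∃ h', BStep h h') ∨ h.IsCall

theorem isHead_call (a j : Nat) (T1 T2 : Ty) {v : Expr} (hv : IsValue v) :
    IsHead (.app (.aname a j (.arrow T1 T2)) v) :=
  .inr ⟨a, j, T1, T2, v, rfl, hv⟩

theorem IsHead.not_isValue {h : Expr} (hh : h.IsHead) : ¬ IsValue h := by
  rcases hh with ⟨h', hb⟩ | ⟨_, _, _, _, _, rfl, -⟩
  · cases hb <;> rintro ⟨⟩
  · rintro ⟨⟩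

theorem IsHead.not_isValue_plug {h : Expr} (hh : h.IsHead) (E : ECtx) : ¬ IsValue (E.plug h) := by
  induction E with
  | hole => exact hh.not_isValue
  | tupleC vs E es ih =>
      intro hv
      cases hv with
      | tuple hv => exact ih (hv _ (by simp))
  | _ => rintro ⟨⟩

end Expr

namespace BStep

theorem app_inv {f v b : Expr} (h : BStep (.app f v) b) :
    ∃ T1 T2 bo, f = .fixfun T1 T2 bo ∧ IsValue v ∧ b = Expr.inst [v, f] 0 bo := by
  cases h with
  | beta hv => exact ⟨_, _, _, rfl, hv, rfl⟩

theorem prim_inv {op : PrimOp} {es : List Expr} {b : Expr} (h : BStep (.prim op es) b) :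
    ∃ cs c, es = cs.map Expr.const ∧ op.eval cs = some c ∧ b = .const c := by
  cases h with
  | prim hev => exact ⟨_, _, rfl, hev, rfl⟩

theorem letTup_inv {n : Nat} {e bo b : Expr} (h : BStep (.letTup n e bo) b) :
    ∃ vs, e = .tuple vs ∧ (∀ v ∈ vs, IsValue v) ∧ b = Expr.inst vs 0 bo := by
  cases h with
  | letTup hv _ => exact ⟨_, rfl, hv, rfl⟩

theorem ite_inv {c e1 e2 b : Expr} (h : BStep (.ite c e1 e2) b) :
    (c = .const (.bool true) ∧ b = e1) ∨ (c = .const (.bool false) ∧ b = e2) := by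
  cases h with
  | iteT => exact .inl ⟨rfl, rfl⟩
  | iteF => exact .inr ⟨rfl, rfl⟩

theorem det {a b₁ b₂ : Expr} (h1 : BStep a b₁) (h2 : BStep a b₂) : b₁ = b₂ := by
  cases h1 with
  | beta => obtain ⟨_, _, _, ⟨⟩, -, rfl⟩ := h2.app_inv; rfl
  | prim hev =>
      obtain ⟨cs', c', heq, hev', rfl⟩ := h2.prim_inv
      rw [← List.map_injective_iff.mpr (fun _ _ h => Expr.const.inj h) heq, hev] at hev'
      exact congrArg _ (Option.some.inj hev')
  | letTup => obtain ⟨_, ⟨⟩, -, rfl⟩ := h2.letTup_inv; rfl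
  | iteT => rcases h2.ite_inv with ⟨-, rfl⟩ | ⟨⟨⟩, -⟩; rfl
  | iteF => rcases h2.ite_inv with ⟨⟨⟩, -⟩ | ⟨-, rfl⟩; rfl

end BStep

theorem append_cons_inj_of_forall {α : Type _} {P : α → Prop} {vs₁ es₁ vs₂ es₂ : List α}
    {p₁ p₂ : α} (hv₁ : ∀ v ∈ vs₁, P v) (hv₂ : ∀ v ∈ vs₂, P v) (hp₁ : ¬ P p₁) (hp₂ : ¬ P p₂)
    (heq : vs₁ ++ p₁ :: es₁ = vs₂ ++ p₂ :: es₂) :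
    vs₁ = vs₂ ∧ p₁ = p₂ ∧ es₁ = es₂ := by
  induction vs₁ generalizing vs₂ with
  | nil =>
      cases vs₂ with
      | nil => simpa using heq
      | cons w vs₂ => exact absurd (List.cons.inj heq).1 fun h => hp₁ (h ▸ hv₂ w (by simp))
  | cons w vs₁ ih =>
      cases vs₂ with
      | nil => exact absurd (List.cons.inj heq).1 fun h => hp₂ (h ▸ hv₁ w (by simp))
      | cons w' vs₂ =>
          obtain ⟨rfl, heq'⟩ := List.cons.inj heq
          obtain ⟨rfl, h⟩ := ih (fun v hv => hv₁ v (by simp [hv]))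
            (fun v hv => hv₂ v (by simp [hv])) heq'
          exact ⟨rfl, h⟩

theorem Expr.IsHead.eq_hole_of_eq_plug {g h : Expr} {E : ECtx} (hg : g.IsHead)
    (hh : h.IsHead) (heq : g = E.plug h) : ∃ T, E = .hole T := by
  cases E with
  | hole T => exact ⟨T, rfl⟩
  | tupleC _ E _ =>
      subst heq
      rcases hg with ⟨_, hb⟩ | ⟨_, _, _, _, _, ⟨⟩, _⟩
      cases hb
  | primC _ _ E _ =>
      subst heq
      rcases hg with ⟨_, hb⟩ | ⟨_, _, _, _, _, ⟨⟩, _⟩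
      obtain ⟨cs, c, hcs, -⟩ := hb.prim_inv
      obtain ⟨c, -, hc⟩ := List.mem_map.mp (hcs ▸ List.mem_append_cons_self)
      exact absurd (hc ▸ IsValue.const c) (hh.not_isValue_plug E)
  | appL E _ =>
      subst heq
      rcases hg with ⟨_, hb⟩ | ⟨a, j, T1, T2, _, hgeq, _⟩
      · obtain ⟨T1, T2, b, hf, -⟩ := hb.app_inv
        exact absurd (hf ▸ IsValue.fixfun T1 T2 b) (hh.not_isValue_plug E)
      · obtain ⟨hf, -⟩ := Expr.app.inj hgeq
        exact absurd (hf ▸ IsValue.aname a j _) (hh.not_isValue_plug E)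
  | appR _ E =>
      subst heq
      rcases hg with ⟨_, hb⟩ | ⟨_, _, _, _, _, hgeq, hv⟩
      · obtain ⟨-, -, -, -, hv, -⟩ := hb.app_inv
        exact absurd hv (hh.not_isValue_plug E)
      · exact absurd ((Expr.app.inj hgeq).2 ▸ hv) (hh.not_isValue_plug E)
  | iteC E _ _ =>
      subst heq
      rcases hg with ⟨_, hb⟩ | ⟨_, _, _, _, _, ⟨⟩, _⟩
      rcases hb.ite_inv with ⟨hc, -⟩ | ⟨hc, -⟩ <;>
        exact absurd (hc ▸ IsValue.const _) (hh.not_isValue_plug E)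
  | letC _ E _ =>
      subst heq
      rcases hg with ⟨_, hb⟩ | ⟨_, _, _, _, _, ⟨⟩, _⟩
      obtain ⟨vs, hc, hvs, -⟩ := hb.letTup_inv
      exact absurd (hc ▸ IsValue.tuple hvs) (hh.not_isValue_plug E)

/-- Unique decomposition: an expression determines its head, and its evaluation context up to
the type annotation of the hole. -/
theorem ECtx.eq_of_plug_eq_plug {E₁ E₂ : ECtx} {h₁ h₂ : Expr} (hwf₁ : E₁.Wf) (hwf₂ : E₂.Wf)
    (hh₁ : h₁.IsHead) (hh₂ : h₂.IsHead) (heq : E₁.plug h₁ = E₂.plug h₂) :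
    h₁ = h₂ ∧ (∀ x, E₁.plug x = E₂.plug x) ∧ (E₁.holeTy = E₂.holeTy → E₁ = E₂) := by
  induction hwf₁ generalizing E₂ with
  | hole T =>
      obtain ⟨T', rfl⟩ := hh₁.eq_hole_of_eq_plug hh₂ heq
      exact ⟨heq, fun _ => rfl, fun hT => by rw [show T = T' from hT]⟩
  | @tupleC vs E es hv₁ _ ih | @primC op vs E es hv₁ _ ih =>
      cases hwf₂ with
      | hole => obtain ⟨_, ⟨⟩⟩ := hh₂.eq_hole_of_eq_plug hh₁ heq.symm
      | tupleC hv₂ hwf₂ | primC hv₂ hwf₂ =>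
          simp only [plug, Expr.tuple.injEq, Expr.prim.injEq, reduceCtorEq] at heq
          all_goals
            try obtain ⟨rfl, heq⟩ := heq
            obtain ⟨rfl, hpe, rfl⟩ := append_cons_inj_of_forall hv₁ hv₂ (hh₁.not_isValue_plug E)
              (hh₂.not_isValue_plug _) heq
            obtain ⟨rfl, hplug, hcond⟩ := ih hwf₂ hpe
            exact ⟨rfl, fun x => by simp [plug, hplug x], fun hT => by rw [hcond hT]⟩
      | _ => simp [plug] at heq
  | @appL E e _ ih =>
      cases hwf₂ with
      | hole => obtain ⟨_, ⟨⟩⟩ := hh₂.eq_hole_of_eq_plug hh₁ heq.symm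
      | appL hwf₂ =>
          obtain ⟨hpe, rfl⟩ := Expr.app.inj heq
          obtain ⟨rfl, hplug, hcond⟩ := ih hwf₂ hpe
          exact ⟨rfl, fun x => by simp [plug, hplug x], fun hT => by rw [hcond hT]⟩
      | appR hv₂ _ => exact absurd ((Expr.app.inj heq).1 ▸ hv₂) (hh₁.not_isValue_plug E)
      | _ => simp [plug] at heq
  | @appR v E hv₁ _ ih =>
      cases hwf₂ with
      | hole => obtain ⟨_, ⟨⟩⟩ := hh₂.eq_hole_of_eq_plug hh₁ heq.symm
      | appL => exact absurd ((Expr.app.inj heq).1 ▸ hv₁) (hh₂.not_isValue_plug _)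
      | appR _ hwf₂ =>
          obtain ⟨rfl, hpe⟩ := Expr.app.inj heq
          obtain ⟨rfl, hplug, hcond⟩ := ih hwf₂ hpe
          exact ⟨rfl, fun x => by simp [plug, hplug x], fun hT => by rw [hcond hT]⟩
      | _ => simp [plug] at heq
  | @iteC E e1 e2 _ ih =>
      cases hwf₂ with
      | hole => obtain ⟨_, ⟨⟩⟩ := hh₂.eq_hole_of_eq_plug hh₁ heq.symm
      | iteC hwf₂ =>
          obtain ⟨hpe, rfl, rfl⟩ := Expr.ite.inj heq
          obtain ⟨rfl, hplug, hcond⟩ := ih hwf₂ hpe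
          exact ⟨rfl, fun x => by simp [plug, hplug x], fun hT => by rw [hcond hT]⟩
      | _ => simp [plug] at heq
  | @letC n E b _ ih =>
      cases hwf₂ with
      | hole => obtain ⟨_, ⟨⟩⟩ := hh₂.eq_hole_of_eq_plug hh₁ heq.symm
      | letC hwf₂ =>
          obtain ⟨rfl, hpe, rfl⟩ := Expr.letTup.inj heq
          obtain ⟨rfl, hplug, hcond⟩ := ih hwf₂ hpe
          exact ⟨rfl, fun x => by simp [plug, hplug x], fun hT => by rw [hcond hT]⟩
      | _ => simp [plug] at heq

theorem Red.inv {e e' : Expr} (h : Red e e') :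
    ∃ (E : ECtx) (a b : Expr), E.Wf ∧ BStep a b ∧ e = E.plug a ∧ e' = E.plug b := by
  obtain ⟨hwf, hb⟩ := h
  exact ⟨_, _, _, hwf, hb, rfl, rfl⟩

theorem Red.det {e e₁ e₂ : Expr} (h1 : Red e e₁) (h2 : Red e e₂) : e₁ = e₂ := by
  obtain ⟨E, a, b, hwf₁, hb₁, rfl, rfl⟩ := h1.inv
  obtain ⟨E', a', b', hwf₂, hb₂, heq, rfl⟩ := h2.inv
  obtain ⟨rfl, hplug, -⟩ := ECtx.eq_of_plug_eq_plug hwf₁ hwf₂ (.inl ⟨_, hb₁⟩) (.inl ⟨_, hb₂⟩) heq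
  rw [hb₁.det hb₂, hplug]

theorem IsValue.not_red {e e' : Expr} (hv : IsValue e) (h : Red e e') : False := by
  obtain ⟨_, hb⟩ := h
  exact Expr.IsHead.not_isValue_plug (.inl ⟨_, hb⟩) _ hv

theorem not_red_plug_call {E : ECtx} {a j : Nat} {T1 T2 : Ty} {v e' : Expr} (hwf : E.Wf)
    (hv : IsValue v) (h : Red (E.plug (.app (.aname a j (.arrow T1 T2)) v)) e') : False := by
  obtain ⟨E', a', b', hwf', hb', heq, -⟩ := h.inv
  obtain ⟨rfl, -⟩ :=
    ECtx.eq_of_plug_eq_plug hwf' hwf (.inl ⟨_, hb'⟩) (Expr.isHead_call a j T1 T2 hv) heq.symm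
  obtain ⟨_, _, _, ⟨⟩, -⟩ := hb'.app_inv

theorem Step.prop_inv {A M K t e V l C} (h : Step (.prop A M K t e V) l C) :
    (l = .tau ∧ ∃ e', Red e e' ∧ C = .prop A M K t e' V) ∨
    (l = .tau ∧ IsValue e ∧ ∃ D vs u V', ulp e = some (D, vs) ∧ K ≠ [] ∧ V = u :: V' ∧
      C = .opp A (insert (t ++ [.pret D]) M) K (t ++ [.pret D]) V' (u ++ vs)) ∨
    (l = .tau ∧ ∃ E a j T1 T2 v D vs u,
      e = E.plug (.app (.aname a j (.arrow T1 T2)) v) ∧ IsValue v ∧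
      ulp v = some (D, vs) ∧ E.Wf ∧ E.holeTy = T2 ∧ A a j = some u ∧
      C = .opp A (insert [Move.pcall a (.arrow T1 T2) D] M)
        ((t, E) :: K) [Move.pcall a (.arrow T1 T2) D] V (u ++ vs)) ∨
    (∃ D vs, l = .mv (.pret D) ∧ K = [] ∧ IsValue e ∧ ulp e = some (D, vs) ∧
      C = .opp A M [] [] [] vs) := by
  cases h with
  | propTau hr => exact .inl ⟨rfl, _, hr, rfl⟩
  | propRet hv hulp hK => exact .inr (.inl ⟨rfl, hv, _, _, _, _, hulp, hK, rfl, rfl⟩)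
  | propCall hv hulp hwf hT hA =>
      exact .inr (.inr (.inl ⟨rfl, _, _, _, _, _, _, _, _, _, rfl, hv, hulp, hwf, hT, hA, rfl⟩))
  | propRetBarb hv hulp => exact .inr (.inr (.inr ⟨_, _, rfl, rfl, hv, hulp, rfl⟩))

theorem Step.prop_det {A M K t e V l₁ l₂ C₁ C₂}
    (h1 : Step (.prop A M K t e V) l₁ C₁) (h2 : Step (.prop A M K t e V) l₂ C₂) :
    l₁ = l₂ ∧ C₁ = C₂ := by
  have callNotVal {E : ECtx} {a j T1 T2 v} (hv : IsValue v) :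
      ¬ IsValue (E.plug (.app (.aname a j (.arrow T1 T2)) v)) :=
    (Expr.isHead_call a j T1 T2 hv).not_isValue_plug E
  rcases h1.prop_inv with ⟨rfl, e₁', hr₁, rfl⟩ |
    ⟨rfl, hv₁, D₁, vs₁, u₁, V₁', hulp₁, hK₁, rfl, rfl⟩ |
    ⟨rfl, E₁, a₁, j₁, T11, T12, v₁, D₁, vs₁, u₁, rfl, hv₁, hulp₁, hwf₁, hT₁, hA₁, rfl⟩ |
    ⟨D₁, vs₁, rfl, rfl, hv₁, hulp₁, rfl⟩ <;>
  rcases h2.prop_inv with ⟨rfl, e₂', hr₂, rfl⟩ |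
    ⟨rfl, hv₂, D₂, vs₂, u₂, V₂', hulp₂, hK₂, hV₂, rfl⟩ |
    ⟨rfl, E₂, a₂, j₂, T21, T22, v₂, D₂, vs₂, u₂, he₂, hv₂, hulp₂, hwf₂, hT₂, hA₂, rfl⟩ |
    ⟨D₂, vs₂, rfl, hK₂, hv₂, hulp₂, rfl⟩
  · exact ⟨rfl, by rw [hr₁.det hr₂]⟩
  · exact (hv₂.not_red hr₁).elim
  · exact (not_red_plug_call hwf₂ hv₂ (he₂ ▸ hr₁)).elim
  · exact (hv₂.not_red hr₁).elim
  · exact (hv₁.not_red hr₂).elim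
  · obtain ⟨rfl, rfl⟩ := Prod.mk.inj (Option.some.inj (hulp₁.symm.trans hulp₂))
    obtain ⟨rfl, rfl⟩ := List.cons.inj hV₂
    exact ⟨rfl, rfl⟩
  · exact (callNotVal hv₂ (he₂ ▸ hv₁)).elim
  · exact absurd hK₂ hK₁
  · exact (not_red_plug_call hwf₁ hv₁ hr₂).elim
  · exact (callNotVal hv₁ hv₂).elim
  · obtain ⟨heq, -, hcond⟩ := ECtx.eq_of_plug_eq_plug hwf₁ hwf₂
      (Expr.isHead_call _ _ _ _ hv₁) (Expr.isHead_call _ _ _ _ hv₂) he₂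
    simp only [Expr.app.injEq, Expr.aname.injEq, Ty.arrow.injEq] at heq
    obtain ⟨⟨rfl, rfl, rfl, rfl⟩, rfl⟩ := heq
    obtain rfl := hcond (hT₁.trans hT₂.symm)
    obtain ⟨rfl, rfl⟩ := Prod.mk.inj (Option.some.inj (hulp₁.symm.trans hulp₂))
    obtain rfl := Option.some.inj (hA₁.symm.trans hA₂)
    exact ⟨rfl, rfl⟩
  · exact (callNotVal hv₁ hv₂).elim
  · exact (hv₁.not_red hr₂).elim
  · exact absurd rfl hK₂
  · exact (callNotVal hv₂ (he₂ ▸ hv₁)).elim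
  · obtain ⟨rfl, rfl⟩ := Prod.mk.inj (Option.some.inj (hulp₁.symm.trans hulp₂))
    exact ⟨rfl, rfl⟩

theorem Step.not_tau_opp_nil {A M t V u C} (h : Step (.opp A M [] t V u) .tau C) : False := by
  cases h <;> simp_all

theorem Step.not_tau_value {A M t v V C} (hv : IsValue v) (h : Step (.prop A M [] t v V) .tau C) :
    False := by
  cases h with
  | propTau hr => exact hv.not_red hr
  | propRet _ _ hK => exact hK rfl
  | propCall hv' => exact (Expr.isHead_call _ _ _ _ hv').not_isValue_plug _ hv

theorem Step.prop_mv_inv {A M K t e V η C'} (h : Step (.prop A M K t e V) (.mv η) C') :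
    ∃ D vs, K = [] ∧ IsValue e ∧ ulp e = some (D, vs) ∧ η = .pret D ∧
      C' = .opp A M [] [] [] vs := by
  cases h with
  | propRetBarb hv hulp => exact ⟨_, _, rfl, hv, hulp, rfl, rfl⟩

theorem Step.opp_mv_inv {A M K t V u η C'} (h : Step (.opp A M K t V u) (.mv η) C') :
    ∃ i vi w T1 T2, K = [] ∧ t = [] ∧ V = [] ∧ u[i]? = some vi ∧
      TypedN [] vi (.arrow T1 T2) ∧ AValTy w T1 ∧ w.names.Nodup ∧
      (∀ a ∈ w.names, (∀ j, A a j = none) ∧ a ∉ MNames M) ∧ η = .ocall i w ∧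
      C' = .prop (A.upd w.names 0 []) M [] [] (.app vi (w.toExpr 0)) [] := by
  cases h with
  | opCallBarb hi hty hw hnodup hfresh =>
      exact ⟨_, _, _, _, _, rfl, rfl, rfl, hi, hty, hw, hnodup, hfresh, rfl, rfl⟩

theorem Step.opp_tau_inv {A M K t V u C} (h : Step (.opp A M K t V u) .tau C) :
    (∃ t₀ E K' w T' j, K = (t₀, E) :: K' ∧ nextMoves M t ⊆ {Move.oret w} ∧ AValTy w T' ∧
      E.holeTy = T' ∧ w.names.Nodup ∧ (∀ a ∈ w.names, A a j = none) ∧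
      LegalM (insert (t ++ [Move.oret w]) M) ∧
      C = .prop (A.upd w.names j u) (insert (t ++ [Move.oret w]) M) K' t₀
        (E.plug (w.toExpr j)) V) ∨
    (∃ i vi w T1 T2 j, K ≠ [] ∧ nextMoves M t ⊆ {Move.ocall i w} ∧ u[i]? = some vi ∧
      TypedN [] vi (.arrow T1 T2) ∧ AValTy w T1 ∧ w.names.Nodup ∧
      (∀ a ∈ w.names, A a j = none) ∧ LegalM (insert (t ++ [Move.ocall i w]) M) ∧
      C = .prop (A.upd w.names j u) (insert (t ++ [Move.ocall i w]) M) K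
        (t ++ [Move.ocall i w]) (.app vi (w.toExpr j)) (u :: V)) := by
  cases h with
  | opRet hnext hty hT hnodup hj hleg =>
      exact .inl ⟨_, _, _, _, _, _, rfl, hnext, hty, hT, hnodup, hj, hleg, rfl⟩
  | opCall hK hnext hi hty hw hnodup hj hleg =>
      exact .inr ⟨_, _, _, _, _, _, hK, hnext, hi, hty, hw, hnodup, hj, hleg, rfl⟩

/-! ### An invariant of reachable configurations -/

def EndsO (t : Trace) : Prop := t = [] ∨ ∃ t' m, t = t' ++ [m] ∧ m.isP = false

theorem endsP_append_singleton {t : Trace} {m : Move} : EndsP (t ++ [m]) ↔ m.isP = true := by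
  constructor
  · rintro ⟨t', m', heq, hP⟩
    obtain ⟨-, ⟨⟩⟩ := List.append_inj' heq rfl
    exact hP
  · exact fun h => ⟨t, m, rfl, h⟩

theorem endsO_append_singleton {t : Trace} {m : Move} : EndsO (t ++ [m]) ↔ m.isP = false := by
  constructor
  · rintro (h | ⟨t', m', heq, hP⟩)
    · simp at h
    · obtain ⟨-, ⟨⟩⟩ := List.append_inj' heq rfl
      exact hP
  · exact fun h => .inr ⟨t, m, rfl, h⟩

theorem EndsP.not_endsO {t : Trace} (h1 : EndsP t) (h2 : EndsO t) : False := by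
  rcases h2 with rfl | ⟨t', m, rfl, hO⟩
  · obtain ⟨t', m, heq, -⟩ := h1
    simp at heq
  · rw [endsP_append_singleton] at h1
    simp_all

/-- The first condition of `LegalM`. -/
def UniqueNext (M : Set Trace) : Prop :=
  ∀ t, EndsP t → ∀ η₁ η₂, η₁ ∈ nextMoves M t → η₂ ∈ nextMoves M t → η₁ = η₂

theorem UniqueNext.insert {M : Set Trace} {t : Trace} {m : Move} (hM : UniqueNext M)
    (ht : EndsO t) : UniqueNext (insert (t ++ [m]) M) := by
  intro s hs η₁ η₂ h1 h2
  simp only [nextMoves, Set.mem_ofPred_eq, Set.mem_insert_iff] at h1 h2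
  rcases h1 with h1 | h1
  · exact ((List.append_inj' h1 rfl).1 ▸ hs).not_endsO ht |>.elim
  rcases h2 with h2 | h2
  · exact ((List.append_inj' h2 rfl).1 ▸ hs).not_endsO ht |>.elim
  exact hM s hs η₁ η₂ h1 h2

namespace AMap

def Covers (A : AMap) (es : List Expr) : Prop := ∀ e ∈ es, ∀ p ∈ e.idxNames, (A p.1 p.2).isSome

def CoversStack (A : AMap) (K : List (Trace × ECtx)) : Prop :=
  ∀ q ∈ K, ∀ p ∈ q.2.idxNames, (A p.1 p.2).isSome

def SelfCovering (A : AMap) : Prop := ∀ a j u, A a j = some u → A.Covers u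

def Bounded (A : AMap) : Prop := ∃ J, ∀ a j, J ≤ j → A a j = none

def Extends (A A' : AMap) : Prop := ∀ a j, (A a j).isSome → (A' a j).isSome

theorem Extends.refl (A : AMap) : A.Extends A := fun _ _ h => h

theorem Extends.trans {A A' A'' : AMap} (h : A.Extends A') (h' : A'.Extends A'') :
    A.Extends A'' := fun a j ha => h' a j (h a j ha)

theorem extends_upd (A : AMap) (ns : List Nat) (j : Nat) (k : List Expr) :
    A.Extends (A.upd ns j k) := by
  intro a j' h
  simp only [upd]
  split <;> simp [h]

theorem Covers.mono {A A' : AMap} (hA : A.Extends A') {es : List Expr} (h : A.Covers es) :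
    A'.Covers es :=
  fun e he p hp => hA p.1 p.2 (h e he p hp)

theorem Covers.of_getElem? {A : AMap} {u : List Expr} {i : Nat} {v : Expr} (hu : A.Covers u)
    (hi : u[i]? = some v) : A.Covers [v] :=
  fun _ h => (List.mem_singleton.mp h) ▸ hu v (List.mem_of_getElem? hi)

theorem CoversStack.mono {A A' : AMap} (hA : A.Extends A') {K : List (Trace × ECtx)}
    (h : A.CoversStack K) : A'.CoversStack K :=
  fun q hq p hp => hA p.1 p.2 (h q hq p hp)

theorem Bounded.upd {A : AMap} {ns j k} (h : A.Bounded) : (A.upd ns j k).Bounded := by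
  obtain ⟨J, hJ⟩ := h
  refine ⟨max J (j + 1), fun a j' hj' => ?_⟩
  have : j' ≠ j := by omega
  simp [AMap.upd, this, hJ a j' (by omega)]

theorem SelfCovering.upd {A : AMap} {ns : List Nat} {j : Nat} {u : List Expr}
    (hA : A.SelfCovering) (hu : A.Covers u) : (A.upd ns j u).SelfCovering := by
  intro a j' u' hu'
  simp only [AMap.upd] at hu'
  split at hu'
  · exact Option.some.inj hu' ▸ hu.mono (extends_upd A ns j u)
  · exact (hA a j' u' hu').mono (extends_upd A ns j u)

theorem isSome_upd_of_mem_idxNames_toExpr (A : AMap) (w : AVal) (j : Nat) (k : List Expr)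
    {p : Nat × Nat} (hp : p ∈ (w.toExpr j).idxNames) : ((A.upd w.names j k) p.1 p.2).isSome := by
  obtain ⟨ha, rfl⟩ := w.mem_idxNames_toExpr hp
  simp [AMap.upd, ha]

end AMap

def Conf.WF : Conf → Prop
  | .prop A M K t e V =>
      UniqueNext M ∧ EndsO t ∧ (∀ q ∈ K, EndsO q.1) ∧ A.Bounded ∧ A.SelfCovering ∧
        A.Covers [e] ∧ A.CoversStack K ∧ ∀ u ∈ V, A.Covers u
  | .opp A M K t V u =>
      UniqueNext M ∧ ((K = [] ∧ t = [] ∧ V = []) ∨ EndsP t) ∧ (∀ q ∈ K, EndsO q.1) ∧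
        A.Bounded ∧ A.SelfCovering ∧ A.CoversStack K ∧ (∀ u' ∈ V, A.Covers u') ∧ A.Covers u

theorem BStep.idxNames_subset {a b : Expr} (h : BStep a b) : ∀ p ∈ b.idxNames, p ∈ a.idxNames := by
  intro p hp
  cases h with
  | beta =>
      rcases Expr.mem_idxNames_inst hp with h | ⟨v', hv', hpv⟩
      · simp [h]
      · simp only [List.mem_cons, List.not_mem_nil, or_false] at hv'
        rcases hv' with rfl | rfl <;> simp_all
  | letTup =>
      rcases Expr.mem_idxNames_inst hp with h | ⟨v', hv', hpv⟩
      · simp [h]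
      · simpa using .inl ⟨v', hv', hpv⟩
  | prim => simp at hp
  | iteT | iteF => simp [hp]

theorem Red.idxNames_subset {e e' : Expr} (h : Red e e') : ∀ p ∈ e'.idxNames, p ∈ e.idxNames := by
  obtain ⟨E, a, b, -, hb, rfl, rfl⟩ := h.inv
  intro p hp
  exact ECtx.mem_idxNames_plug.mpr ((ECtx.mem_idxNames_plug.mp hp).imp_right (hb.idxNames_subset p))

theorem Step.wf_of_prop {A M K t e V l C'} (h : Step (.prop A M K t e V) l C')
    (hI : (Conf.prop A M K t e V).WF) : C'.WF := by
  cases h with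
  | propTau hr =>
      obtain ⟨hU, ht, hK, hB, hA, he, hKc, hV⟩ := hI
      refine ⟨hU, ht, hK, hB, hA, ?_, hKc, hV⟩
      simpa [AMap.Covers] using
        fun p hp => he _ (List.mem_singleton_self _) p (hr.idxNames_subset p hp)
  | propRetBarb hv hulp =>
      obtain ⟨hU, -, -, hB, hA, he, -, -⟩ := hI
      refine ⟨hU, .inl ⟨rfl, rfl, rfl⟩, by simp, hB, hA, by simp [AMap.CoversStack], by simp, ?_⟩
      exact fun f hf p hp => he _ (List.mem_singleton_self _) p (idxNames_of_ulp hulp f hf p hp)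
  | propRet hv hulp hK =>
      obtain ⟨hU, ht, hKe, hB, hA, he, hKc, hV⟩ := hI
      refine ⟨hU.insert ht, .inr (endsP_append_singleton.mpr rfl), hKe, hB, hA, hKc,
        fun u' hu' => hV u' (List.mem_cons_of_mem _ hu'), ?_⟩
      intro f hf p hp
      rcases List.mem_append.mp hf with hf | hf
      · exact hV _ List.mem_cons_self f hf p hp
      · exact he _ (List.mem_singleton_self _) p (idxNames_of_ulp hulp f hf p hp)
  | propCall hv hulp hwf hT hu =>
      obtain ⟨hU, ht, hKe, hB, hA, he, hKc, hV⟩ := hI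
      have he' := he _ (List.mem_singleton_self _)
      refine ⟨by simpa using hU.insert (m := .pcall ..) (.inl rfl), .inr ⟨[], _, rfl, rfl⟩,
        ?_, hB, hA, ?_, hV, ?_⟩
      · rintro q (_ | ⟨_, hq⟩)
        exacts [ht, hKe q hq]
      · rintro q (_ | ⟨_, hq⟩)
        exacts [fun p hp => he' p (ECtx.mem_idxNames_plug.mpr (.inl hp)), hKc q hq]
      · intro f hf p hp
        rcases List.mem_append.mp hf with hf | hf
        · exact hA _ _ _ hu f hf p hp
        · exact he' p (ECtx.mem_idxNames_plug.mpr (.inr (by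
            simpa using .inr (idxNames_of_ulp hulp f hf p hp))))

theorem Step.wf_of_opp {A M K t V u l C'} (h : Step (.opp A M K t V u) l C')
    (hI : (Conf.opp A M K t V u).WF) : C'.WF := by
  cases h with
  | @opRet _ _ _ _ _ _ _ _ w _ j _ _ _ _ _ hleg =>
      obtain ⟨-, -, hKe, hB, hA, hKc, hV, hu⟩ := hI
      have hext := AMap.extends_upd A w.names j u
      refine ⟨hleg.1, hKe _ List.mem_cons_self, fun q hq => hKe q (List.mem_cons_of_mem _ hq),
        hB.upd, hA.upd hu, ?_,
        AMap.CoversStack.mono hext fun q hq => hKc q (List.mem_cons_of_mem _ hq),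
        fun u' hu' => (hV u' hu').mono hext⟩
      simp only [AMap.Covers, List.mem_singleton, forall_eq]
      intro p hp
      rcases ECtx.mem_idxNames_plug.mp hp with hp | hp
      · exact hext p.1 p.2 (hKc _ List.mem_cons_self p hp)
      · exact A.isSome_upd_of_mem_idxNames_toExpr w j u hp
  | @opCallBarb _ _ _ _ vi w _ _ hi =>
      obtain ⟨hU, -, hKe, hB, hA, hKc, -, hu⟩ := hI
      have hext := AMap.extends_upd A w.names 0 []
      refine ⟨hU, .inl rfl, hKe, hB.upd, hA.upd (by simp [AMap.Covers]), ?_, hKc.mono hext,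
        by simp⟩
      simp only [AMap.Covers, List.mem_singleton, forall_eq, Expr.idxNames_app, List.mem_append]
      rintro p (hp | hp)
      · exact hext p.1 p.2 (hu vi (List.mem_of_getElem? hi) p hp)
      · exact A.isSome_upd_of_mem_idxNames_toExpr w 0 [] hp
  | @opCall _ _ _ _ _ _ _ vi w _ _ j _ _ hi _ _ _ _ hleg =>
      obtain ⟨-, -, hKe, hB, hA, hKc, hV, hu⟩ := hI
      have hext := AMap.extends_upd A w.names j u
      refine ⟨hleg.1, endsO_append_singleton.mpr rfl, hKe, hB.upd, hA.upd hu, ?_, hKc.mono hext,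
        ?_⟩
      · simp only [AMap.Covers, List.mem_singleton, forall_eq, Expr.idxNames_app, List.mem_append]
        rintro p (hp | hp)
        · exact hext p.1 p.2 (hu vi (List.mem_of_getElem? hi) p hp)
        · exact A.isSome_upd_of_mem_idxNames_toExpr w j u hp
      · simpa using ⟨hu.mono hext, fun u' hu' => (hV u' hu').mono hext⟩

theorem Step.wf {C l C'} (h : Step C l C') (hI : C.WF) : C'.WF := by
  cases C
  exacts [h.wf_of_prop hI, h.wf_of_opp hI]

theorem Taus.wf {C D} (h : Taus C D) (hI : C.WF) : D.WF := by
  induction h with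
  | refl => exact hI
  | tail _ hbc ih => exact hbc.wf ih

theorem wf_initConf {e : Expr} {T : Ty} (h : Typed [] e T) : (initConf e).WF :=
  ⟨fun _ _ _ _ h1 => absurd h1 (by simp [nextMoves]), .inl rfl, by simp, ⟨0, fun _ _ _ => rfl⟩,
    fun _ _ _ hu => absurd hu (by simp [AMap.empty]), by simp [AMap.Covers, h.idxNames_eq_nil],
    by simp [AMap.CoversStack], by simp⟩

/-! ### Configurations equal up to the indices of abstract names -/

def reindexStack (σ : Nat → Nat → Nat) (K : List (Trace × ECtx)) : List (Trace × ECtx) :=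
  K.map fun q => (q.1, q.2.reindex σ)

@[simp] theorem reindexStack_nil (σ : Nat → Nat → Nat) : reindexStack σ [] = [] := rfl

def AMap.Reindexed (σ : Nat → Nat → Nat) (A A' : AMap) : Prop :=
  ∀ a j u, A a j = some u → A' a (σ a j) = some (u.map (Expr.reindex σ))

def IsReindex (σ : Nat → Nat → Nat) : Conf → Conf → Prop
  | .prop A M K t e V, .prop A' M' K' t' e' V' =>
      A.Reindexed σ A' ∧ M' = M ∧ K' = reindexStack σ K ∧ t' = t ∧ e' = e.reindex σ ∧
        V' = V.map (List.map (Expr.reindex σ))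
  | .opp A M K t V u, .opp A' M' K' t' V' u' =>
      A.Reindexed σ A' ∧ M' = M ∧ K' = reindexStack σ K ∧ t' = t ∧
        V' = V.map (List.map (Expr.reindex σ)) ∧ u' = u.map (Expr.reindex σ)
  | _, _ => False

theorem isReindex_id (C : Conf) : IsReindex (fun _ j => j) C C := by
  have hA (A : AMap) : A.Reindexed (fun _ j => j) A := fun a j u hu => by simp [hu]
  cases C <;> simp [IsReindex, reindexStack, hA]

theorem reindexStack_eq_nil {σ K} : reindexStack σ K = [] ↔ K = [] := List.map_eq_nil_iff

theorem IsReindex.mset_eq {σ C₁ C₂} (hR : IsReindex σ C₁ C₂) : C₂.Mset = C₁.Mset := by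
  cases C₁ <;> cases C₂ <;> first | exact hR.elim | exact hR.2.1

section Agree

variable {σ σ' : Nat → Nat → Nat} {A : AMap}

theorem Expr.reindex_eq_of_covers {e : Expr} (he : A.Covers [e])
    (h : ∀ a j, (A a j).isSome → σ' a j = σ a j) : e.reindex σ' = e.reindex σ :=
  e.reindex_congr fun p hp => h p.1 p.2 (he e (List.mem_singleton_self _) p hp)

theorem map_reindex_eq_of_covers {u : List Expr} (hu : A.Covers u)
    (h : ∀ a j, (A a j).isSome → σ' a j = σ a j) :
    u.map (Expr.reindex σ') = u.map (Expr.reindex σ) :=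
  List.map_congr_left fun e he =>
    Expr.reindex_eq_of_covers (fun _ h' => (List.mem_singleton.mp h') ▸ hu e he) h

theorem reindexStack_eq_of_coversStack {K : List (Trace × ECtx)} (hK : A.CoversStack K)
    (h : ∀ a j, (A a j).isSome → σ' a j = σ a j) : reindexStack σ' K = reindexStack σ K :=
  List.map_congr_left fun q hq => by
    rw [q.2.reindex_congr fun p hp => h p.1 p.2 (hK q hq p hp)]

end Agree

/-- The renaming after the opponent introduced the names `ws` at index `j₁` on one side and
`j₂` on the other. -/
def updIdx (σ : Nat → Nat → Nat) (ws : List Nat) (j₁ j₂ : Nat) : Nat → Nat → Nat :=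
  fun a j => if a ∈ ws ∧ j = j₁ then j₂ else σ a j

section UpdIdx

variable {σ : Nat → Nat → Nat} {A₁ A₂ : AMap} {ws : List Nat} {j₁ j₂ : Nat}

theorem updIdx_eq_of_isSome (hj₁ : ∀ a ∈ ws, A₁ a j₁ = none) :
    ∀ a j, (A₁ a j).isSome → updIdx σ ws j₁ j₂ a j = σ a j := by
  intro a j h
  simp only [updIdx]
  split
  · rename_i hc
    simp [hc.2, hj₁ a hc.1] at h
  · rfl

theorem AMap.Reindexed.upd {k : List Expr} (hA : A₁.Reindexed σ A₂) (hself : A₁.SelfCovering)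
    (hk : A₁.Covers k) (hj₁ : ∀ a ∈ ws, A₁ a j₁ = none) (hj₂ : ∀ a ∈ ws, A₂ a j₂ = none) :
    (A₁.upd ws j₁ k).Reindexed (updIdx σ ws j₁ j₂) (A₂.upd ws j₂ (k.map (Expr.reindex σ))) := by
  have hagree := updIdx_eq_of_isSome (σ := σ) (j₂ := j₂) hj₁
  intro a j u hu
  simp only [AMap.upd] at hu
  split at hu
  · rename_i hc
    obtain rfl := Option.some.inj hu
    simp [AMap.upd, updIdx, hc, map_reindex_eq_of_covers hk hagree]
  · have hσ : updIdx σ ws j₁ j₂ a j = σ a j := hagree a j (by simp [hu])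
    have hne : ¬ (a ∈ ws ∧ σ a j = j₂) := fun ⟨hmem, hj⟩ => by
      simpa [hj, hj₂ a hmem] using hA a j u hu
    simp only [hσ, AMap.upd, if_neg hne, hA a j u hu,
      map_reindex_eq_of_covers (hself a j u hu) hagree]

theorem isReindex_upd {k : List Expr} {M K t e e₂ V} (hA : A₁.Reindexed σ A₂)
    (hself : A₁.SelfCovering) (hk : A₁.Covers k) (hKc : A₁.CoversStack K)
    (hV : ∀ u ∈ V, A₁.Covers u) (hj₁ : ∀ a ∈ ws, A₁ a j₁ = none)
    (hj₂ : ∀ a ∈ ws, A₂ a j₂ = none) (he : e.reindex (updIdx σ ws j₁ j₂) = e₂) :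
    IsReindex (updIdx σ ws j₁ j₂) (.prop (A₁.upd ws j₁ k) M K t e V)
      (.prop (A₂.upd ws j₂ (k.map (Expr.reindex σ))) M (reindexStack σ K) t e₂
        (V.map (List.map (Expr.reindex σ)))) := by
  have hagree := updIdx_eq_of_isSome (σ := σ) (j₂ := j₂) hj₁
  exact ⟨hA.upd hself hk hj₁ hj₂, rfl, (reindexStack_eq_of_coversStack hKc hagree).symm, rfl,
    he.symm, List.map_congr_left fun u hu => (map_reindex_eq_of_covers (hV u hu) hagree).symm⟩

theorem reindex_updIdx_plug_toExpr {E : ECtx} {w : AVal}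
    (hE : ∀ p ∈ E.idxNames, (A₁ p.1 p.2).isSome)
    (hj₁ : ∀ a ∈ w.names, A₁ a j₁ = none) :
    (E.plug (w.toExpr j₁)).reindex (updIdx σ w.names j₁ j₂) = (E.reindex σ).plug (w.toExpr j₂) := by
  rw [ECtx.reindex_plug, w.reindex_toExpr (j' := j₂) fun a ha => by simp [updIdx, ha],
    E.reindex_congr fun p hp => updIdx_eq_of_isSome hj₁ p.1 p.2 (hE p hp)]

theorem reindex_updIdx_app_toExpr {v : Expr} {w : AVal} (hv : A₁.Covers [v])
    (hj₁ : ∀ a ∈ w.names, A₁ a j₁ = none) :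
    (Expr.app v (w.toExpr j₁)).reindex (updIdx σ w.names j₁ j₂) =
      .app (v.reindex σ) (w.toExpr j₂) := by
  rw [Expr.reindex_app, w.reindex_toExpr (j' := j₂) fun a ha => by simp [updIdx, ha],
    Expr.reindex_eq_of_covers hv (updIdx_eq_of_isSome hj₁)]

end UpdIdx

theorem ulp_reindex_of_eq {σ : Nat → Nat → Nat} {v : Expr} {D : VCtx} {vs : List Expr}
    (h : ulp v = some (D, vs)) : ulp (v.reindex σ) = some (D, vs.map (Expr.reindex σ)) := by
  rw [ulp_reindex, h]
  rfl

theorem IsReindex.step_of_prop {σ : Nat → Nat → Nat} {A M K t e V} {C₂ C₁' : Conf} {l : Lab}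
    (hR : IsReindex σ (.prop A M K t e V) C₂) (h : Step (.prop A M K t e V) l C₁') :
    ∃ C₂', Step C₂ l C₂' ∧ IsReindex σ C₁' C₂' := by
  rcases C₂ with ⟨A₂, M₂, K₂, t₂, e₂, V₂⟩ | _
  swap
  · exact hR.elim
  obtain ⟨hA, rfl, rfl, rfl, rfl, rfl⟩ := hR
  cases h with
  | propTau hr => exact ⟨_, .propTau hr.reindex, hA, rfl, rfl, rfl, rfl, rfl⟩
  | propRetBarb hv hulp =>
      exact ⟨_, .propRetBarb ((Expr.isValue_reindex _).mpr hv) (ulp_reindex_of_eq hulp),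
        hA, rfl, rfl, rfl, rfl, rfl⟩
  | propRet hv hulp hK =>
      exact ⟨_, .propRet ((Expr.isValue_reindex _).mpr hv) (ulp_reindex_of_eq hulp)
        (mt reindexStack_eq_nil.mp hK), hA, rfl, rfl, rfl, rfl, by simp⟩
  | @propCall _ _ _ _ E a j T1 T2 v _ D vs u hv hulp hwf hT hu =>
      have hstep := Step.propCall (A := A₂) (M := M₂) (K := reindexStack σ K) (t := t₂)
        (V := V.map (List.map (Expr.reindex σ))) (T1 := T1)
        ((Expr.isValue_reindex (σ := σ) v).mpr hv)
        (ulp_reindex_of_eq hulp) (hwf.reindex (σ := σ)) (by rw [ECtx.holeTy_reindex, hT])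
        (hA a j u hu)
      rw [← Expr.reindex_aname, ← Expr.reindex_app, ← ECtx.reindex_plug] at hstep
      exact ⟨_, hstep, hA, rfl, by simp [reindexStack], rfl, rfl, by simp⟩

theorem IsReindex.step_of_opp {σ : Nat → Nat → Nat} {A M K t V u} {C₂ C₁' : Conf} {l : Lab}
    (hR : IsReindex σ (.opp A M K t V u) C₂) (hI₁ : (Conf.opp A M K t V u).WF) (hI₂ : C₂.WF)
    (h : Step (.opp A M K t V u) l C₁')
    (hfr : ∀ i w, l = .mv (.ocall i w) → ∀ a ∈ w.names, ∀ j, C₂.Amap a j = none) :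
    ∃ σ' C₂', Step C₂ l C₂' ∧ IsReindex σ' C₁' C₂' := by
  rcases C₂ with _ | ⟨A₂, M₂, K₂, t₂, V₂, u₂⟩
  · exact hR.elim
  obtain ⟨hA, rfl, rfl, rfl, rfl, rfl⟩ := hR
  obtain ⟨-, -, -, -, hself, hKc, hV, hu⟩ := hI₁
  obtain ⟨J, hJ⟩ := hI₂.2.2.2.1
  have hJ' (ws : List Nat) : ∀ a ∈ ws, A₂ a J = none := fun a _ => hJ a J le_rfl
  cases h with
  | @opRet _ _ _ _ _ _ _ _ w _ j hnext hty hT hnodup hj hleg =>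
      exact ⟨_, _, .opRet hnext hty (by rw [ECtx.holeTy_reindex, hT]) hnodup (hJ' _) hleg,
        isReindex_upd hA hself hu (fun q hq => hKc q (List.mem_cons_of_mem _ hq)) hV hj (hJ' _)
          (reindex_updIdx_plug_toExpr (hKc _ List.mem_cons_self) hj)⟩
  | @opCallBarb _ _ _ i vi w T1 T2 hi hty hw hnodup hfresh =>
      have hj : ∀ a ∈ w.names, A a 0 = none := fun a ha => (hfresh a ha).1 0
      have hj₂ : ∀ a ∈ w.names, A₂ a 0 = none := fun a ha => hfr i w rfl a ha 0
      refine ⟨updIdx σ w.names 0 0, _, .opCallBarb (by simp [hi]) (hty.reindex (σ := σ)) hw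
        hnodup (fun a ha => ⟨hfr i w rfl a ha, (hfresh a ha).2⟩), ?_⟩
      simpa using isReindex_upd (k := []) (V := []) hA hself (by simp [AMap.Covers]) hKc
        (by simp) hj hj₂ (reindex_updIdx_app_toExpr (σ := σ) (hu.of_getElem? hi) hj)
  | @opCall _ _ _ _ _ _ i vi w T1 T2 j hK hnext hi hty hw hnodup hj hleg =>
      refine ⟨updIdx σ w.names j J, _, .opCall (mt reindexStack_eq_nil.mp hK) hnext
        (by simp [hi]) (hty.reindex (σ := σ)) hw hnodup (hJ' _) hleg, ?_⟩
      exact isReindex_upd (V := u :: _) hA hself hu hKc (by simpa using ⟨hu, hV⟩) hj (hJ' _)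
        (reindex_updIdx_app_toExpr (hu.of_getElem? hi) hj)

theorem IsReindex.step {σ : Nat → Nat → Nat} {C₁ C₂ C₁' : Conf} {l : Lab}
    (hR : IsReindex σ C₁ C₂) (hI₁ : C₁.WF) (hI₂ : C₂.WF) (h : Step C₁ l C₁')
    (hfr : ∀ i w, l = .mv (.ocall i w) → ∀ a ∈ w.names, ∀ j, C₂.Amap a j = none) :
    ∃ σ' C₂', Step C₂ l C₂' ∧ IsReindex σ' C₁' C₂' := by
  cases C₁
  · obtain ⟨C₂', h₂, hR'⟩ := hR.step_of_prop h
    exact ⟨σ, C₂', h₂, hR'⟩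
  · exact hR.step_of_opp hI₁ hI₂ h hfr

/-! ### Runs that stay within one legal memory are determined up to reindexing -/

theorem Step.mset_subset {C l C'} (h : Step C l C') : C.Mset ⊆ C'.Mset := by
  cases h <;> first | exact subset_rfl | exact Set.subset_insert _ _

theorem Taus.mset_subset {C D} (h : Taus C D) : C.Mset ⊆ D.Mset := by
  induction h with
  | refl => exact subset_rfl
  | tail _ hbc ih => exact ih.trans hbc.mset_subset

/-- Configurations without τ-transitions. -/
def Conf.AtTop (C : Conf) : Prop :=
  (∃ A M t v V, C = .prop A M [] t v V ∧ IsValue v) ∨ (∃ A M t V u, C = .opp A M [] t V u)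

theorem Conf.AtTop.not_step_tau {C D} (hS : C.AtTop) (h : Step C .tau D) : False := by
  rcases hS with ⟨A, M, t, v, V, rfl, hv⟩ | ⟨A, M, t, V, u, rfl⟩
  · exact h.not_tau_value hv
  · exact h.not_tau_opp_nil

theorem IsReindex.atTop_iff {σ C₁ C₂} (hR : IsReindex σ C₁ C₂) : C₂.AtTop ↔ C₁.AtTop := by
  rcases C₁ with ⟨A, M, K, t, e, V⟩ | ⟨A, M, K, t, V, u⟩ <;>
    rcases C₂ with ⟨A₂, M₂, K₂, t₂, e₂, V₂⟩ | ⟨A₂, M₂, K₂, t₂, V₂, u₂⟩ <;>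
    first | exact hR.elim | obtain ⟨-, rfl, rfl, rfl, rfl, rfl⟩ := hR
  all_goals simp [Conf.AtTop, reindexStack_eq_nil]

theorem Step.atTop_of_pret {C C' : Conf} {D : VCtx} (h : Step C (.mv (.pret D)) C') : C.AtTop := by
  cases h with
  | propRetBarb hv => exact .inl ⟨_, _, _, _, _, rfl, hv⟩

/-- The bound `N` on both memories pins down the opponent moves. -/
theorem IsReindex.tau_step_pair {σ : Nat → Nat → Nat} {C₁ C₂ D₁ D₂ : Conf} {N : Set Trace}
    (hR : IsReindex σ C₁ C₂) (hI₁ : C₁.WF)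
    (h1 : Step C₁ .tau D₁) (h2 : Step C₂ .tau D₂) (hN₁ : D₁.Mset ⊆ N) (hN₂ : D₂.Mset ⊆ N)
    (hU : UniqueNext N) : ∃ σ', IsReindex σ' D₁ D₂ := by
  rcases C₁ with ⟨A, M, K, t, e, V⟩ | ⟨A, M, K, t, V, u⟩
  · obtain ⟨D₂', hstep₂, hR'⟩ := hR.step_of_prop h1
    rcases C₂ with ⟨⟩ | ⟨⟩
    · exact ⟨σ, (h2.prop_det hstep₂).2 ▸ hR'⟩
    · exact hR.elim
  rcases C₂ with ⟨⟩ | ⟨A₂, M₂, K₂, t₂, V₂, u₂⟩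
  · exact hR.elim
  obtain ⟨hA, rfl, rfl, rfl, rfl, rfl⟩ := hR
  obtain ⟨-, ht, -, -, hself, hKc, hV, hu⟩ := hI₁
  have hnext {m₁ m₂ : Move} (hK : K ≠ []) (h₁ : insert (t₂ ++ [m₁]) M₂ ⊆ N)
      (h₂ : insert (t₂ ++ [m₂]) M₂ ⊆ N) : m₁ = m₂ :=
    hU t₂ (ht.resolve_left fun h => hK h.1) _ _ (h₁ (Set.mem_insert _ _)) (h₂ (Set.mem_insert _ _))
  rcases h1.opp_tau_inv with
    ⟨t₀, E, K', w, -, j₁, rfl, -, -, -, -, hj₁, -, rfl⟩ |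
    ⟨i, vi, w, -, -, j₁, hK, -, hi, -, -, -, hj₁, -, rfl⟩ <;>
  rcases h2.opp_tau_inv with
    ⟨_, _, _, w₂, -, j₂, hK₂, -, -, -, -, hj₂, -, rfl⟩ |
    ⟨i₂, _, w₂, -, -, j₂, -, -, hi₂, -, -, -, hj₂, -, rfl⟩
  · obtain rfl : w = w₂ := Move.oret.inj (hnext (List.cons_ne_nil _ _) hN₁ hN₂)
    obtain ⟨⟨rfl, rfl⟩, rfl⟩ : (_ = t₀ ∧ _ = E.reindex σ) ∧ _ = reindexStack σ K' := by
      simpa [reindexStack] using hK₂.symm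
    exact ⟨_, isReindex_upd hA hself hu (fun q hq => hKc q (List.mem_cons_of_mem _ hq)) hV hj₁
      hj₂ (reindex_updIdx_plug_toExpr (hKc _ List.mem_cons_self) hj₁)⟩
  · exact nomatch hnext (List.cons_ne_nil _ _) hN₁ hN₂
  · exact nomatch hnext hK hN₁ hN₂
  · obtain ⟨rfl, rfl⟩ := Move.ocall.inj (hnext hK hN₁ hN₂)
    obtain rfl : _ = vi.reindex σ := by simpa [hi] using hi₂.symm
    exact ⟨_, isReindex_upd (V := u :: V) hA hself hu hKc (by simpa using ⟨hu, hV⟩) hj₁ hj₂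
      (reindex_updIdx_app_toExpr (hu.of_getElem? hi) hj₁)⟩

theorem IsReindex.mv_step_pair {σ : Nat → Nat → Nat} {C₁ C₂ D₁ D₂ : Conf} {η : Move}
    (hR : IsReindex σ C₁ C₂) (hI₁ : C₁.WF) (h1 : Step C₁ (.mv η) D₁) (h2 : Step C₂ (.mv η) D₂) :
    ∃ σ', IsReindex σ' D₁ D₂ := by
  rcases C₁ with ⟨A, M, K, t, e, V⟩ | ⟨A, M, K, t, V, u⟩ <;>
    rcases C₂ with ⟨A₂, M₂, K₂, t₂, e₂, V₂⟩ | ⟨A₂, M₂, K₂, t₂, V₂, u₂⟩ <;>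
    first | exact hR.elim | obtain ⟨hA, rfl, rfl, rfl, rfl, rfl⟩ := hR
  · obtain ⟨D, vs, -, -, hulp, rfl, rfl⟩ := h1.prop_mv_inv
    obtain ⟨D', vs', -, -, hulp', -, rfl⟩ := h2.prop_mv_inv
    obtain ⟨-, rfl⟩ := Prod.mk.inj (Option.some.inj ((ulp_reindex_of_eq hulp).symm.trans hulp'))
    exact ⟨σ, hA, rfl, rfl, rfl, rfl, rfl⟩
  · obtain ⟨-, -, hself, -, -, hu⟩ := hI₁.2.2
    obtain ⟨i, vi, w, -, -, rfl, rfl, rfl, hi, -, -, -, hfresh, rfl, rfl⟩ := h1.opp_mv_inv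
    obtain ⟨_, _, _, -, -, -, -, -, hi₂, -, -, -, hfresh₂, hη, rfl⟩ := h2.opp_mv_inv
    obtain ⟨rfl, rfl⟩ := Move.ocall.inj hη
    obtain rfl : _ = vi.reindex σ := by simpa [hi] using hi₂.symm
    have hj : ∀ a ∈ w.names, A a 0 = none := fun a ha => (hfresh a ha).1 0
    have := isReindex_upd (k := []) (K := []) (V := []) (M := M₂) (t := []) hA hself
      (by simp [AMap.Covers]) (by simp [AMap.CoversStack]) (by simp) hj
      (fun a ha => (hfresh₂ a ha).1 0) (reindex_updIdx_app_toExpr (hu.of_getElem? hi) hj)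
    exact ⟨_, by simpa using this⟩

theorem IsReindex.taus_pair {N : Set Trace} (hU : UniqueNext N) {C₁ D₁ : Conf}
    (h1 : Taus C₁ D₁) {σ : Nat → Nat → Nat} {C₂ D₂ : Conf} (hR : IsReindex σ C₁ C₂)
    (hI₁ : C₁.WF) (h2 : Taus C₂ D₂) (hS₁ : D₁.AtTop) (hS₂ : D₂.AtTop)
    (hN₁ : D₁.Mset ⊆ N) (hN₂ : D₂.Mset ⊆ N) : ∃ σ', IsReindex σ' D₁ D₂ := by
  induction h1 using Relation.ReflTransGen.head_induction_on generalizing σ C₂ with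
  | refl =>
      rcases Relation.ReflTransGen.cases_head h2 with rfl | ⟨C₂', hstep₂, -⟩
      · exact ⟨σ, hR⟩
      · exact ((hR.atTop_iff.mpr hS₁).not_step_tau hstep₂).elim
  | head hstep₁ hrest ih =>
      rcases Relation.ReflTransGen.cases_head h2 with rfl | ⟨C₂', hstep₂, hrest₂⟩
      · exact ((hR.atTop_iff.mp hS₂).not_step_tau hstep₁).elim
      · obtain ⟨σ', hR'⟩ := hR.tau_step_pair hI₁ hstep₁ hstep₂
          ((Taus.mset_subset hrest).trans hN₁) ((Taus.mset_subset hrest₂).trans hN₂) hU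
        exact ih hR' (hstep₁.wf hI₁) hrest₂

theorem IsReindex.taus {C D : Conf} (h : Taus C D) {σ : Nat → Nat → Nat} {C₂ : Conf}
    (hR : IsReindex σ C C₂) (hI₁ : C.WF) (hI₂ : C₂.WF) :
    ∃ σ' D₂, Taus C₂ D₂ ∧ IsReindex σ' D D₂ ∧ D₂.WF := by
  induction h using Relation.ReflTransGen.head_induction_on generalizing σ C₂ with
  | refl => exact ⟨_, _, .refl, hR, hI₂⟩
  | head hstep _ ih =>
      obtain ⟨σ₁, X₂, hstep₂, hR₁⟩ := hR.step hI₁ hI₂ hstep (by rintro _ _ ⟨⟩)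
      obtain ⟨σ', D₂, hta, hR', hID₂⟩ := ih hR₁ (hstep.wf hI₁) (hstep₂.wf hI₂)
      exact ⟨σ', D₂, .head hstep₂ hta, hR', hID₂⟩

/-! ### The shape of runs -/

/-- Configurations in the middle of a top-level interaction. -/
def Conf.Busy (C : Conf) : Prop :=
  (∃ A M K t e V, C = .prop A M K t e V) ∨ (∃ A M K t V u, C = .opp A M K t V u ∧ K ≠ [])

/-- The configurations right after a top-level proponent return. -/
def Conf.Returned (C : Conf) : Prop := ∃ A M u, C = .opp A M [] [] [] u

theorem Step.busy_of_tau {C C' : Conf} (h : Step C .tau C') : C'.Busy := by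
  cases h with
  | propRet _ _ hK => exact .inr ⟨_, _, _, _, _, _, rfl, hK⟩
  | propCall => exact .inr ⟨_, _, _, _, _, _, rfl, List.cons_ne_nil _ _⟩
  | _ => exact .inl ⟨_, _, _, _, _, _, rfl⟩

theorem Taus.busy {C D : Conf} (h : Taus C D) (hC : C.Busy) : D.Busy := by
  induction h with
  | refl => exact hC
  | tail _ hbc => exact hbc.busy_of_tau

theorem Conf.Busy.not_final {C : Conf} (hC : C.Busy) (hF : C.Final) : False := by
  obtain ⟨A, M, t, V, u, rfl⟩ := hF
  rcases hC with ⟨_, _, _, _, _, _, ⟨⟩⟩ | ⟨_, _, _, _, _, _, ⟨⟩, hK⟩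
  exact hK rfl

theorem Conf.Returned.final {C : Conf} (hC : C.Returned) : C.Final := by
  obtain ⟨A, M, u, rfl⟩ := hC
  exact ⟨_, _, _, _, _, rfl⟩

theorem Taus.eq_of_returned {C D : Conf} (h : Taus C D) (hC : C.Returned) : D = C := by
  obtain ⟨A, M, u, rfl⟩ := hC
  rcases Relation.ReflTransGen.cases_head h with rfl | ⟨_, hstep, -⟩
  · rfl
  · exact hstep.not_tau_opp_nil.elim

theorem Step.returned_of_pret {C C' : Conf} {D : VCtx} (h : Step C (.mv (.pret D)) C') :
    C'.Returned := by
  cases h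
  exact ⟨_, _, _, rfl⟩

theorem Step.ocall_inv {C C' : Conf} {i : Nat} {w : AVal} (h : Step C (.mv (.ocall i w)) C') :
    ∃ A M u, C = .opp A M [] [] [] u ∧ (∀ a ∈ w.names, (∀ j, A a j = none) ∧ a ∉ MNames M) ∧
      C'.Busy := by
  cases h with
  | opCallBarb _ _ _ _ hfresh => exact ⟨_, _, _, rfl, hfresh, .inl ⟨_, _, _, _, _, _, rfl⟩⟩

theorem WStep.of_busy {C C₁ : Conf} {η : Move} (hC : C.Busy) (h : WStep C η C₁) :
    ∃ D, η = .pret D ∧ ∃ Ca, Taus C Ca ∧ Step Ca (.mv (.pret D)) C₁ ∧ C₁.Returned := by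
  obtain ⟨Ca, Cb, hta, hst, htb⟩ := h
  rcases Ca with ⟨⟩ | ⟨A, M, K, t, V, u⟩
  · obtain ⟨D, -, -, -, -, rfl, -⟩ := hst.prop_mv_inv
    obtain rfl := htb.eq_of_returned hst.returned_of_pret
    exact ⟨D, rfl, _, hta, hst, hst.returned_of_pret⟩
  · obtain ⟨-, -, -, -, -, rfl, -⟩ := hst.opp_mv_inv
    rcases hta.busy hC with ⟨_, _, _, _, _, _, ⟨⟩⟩ | ⟨_, _, _, _, _, _, ⟨⟩, hK⟩
    exact (hK rfl).elim

theorem WStep.of_returned {C C₁ : Conf} {η : Move} (hC : C.Returned) (h : WStep C η C₁) :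
    ∃ i w, η = .ocall i w ∧ ∃ Cb, Step C (.mv η) Cb ∧ Taus Cb C₁ ∧ C₁.Busy := by
  obtain ⟨Ca, Cb, hta, hst, htb⟩ := h
  obtain rfl := hta.eq_of_returned hC
  obtain ⟨A, M, u, rfl⟩ := hC
  obtain ⟨i, -, w, -, -, -, -, -, -, -, -, -, -, rfl, -⟩ := hst.opp_mv_inv
  obtain ⟨-, -, -, -, -, hB⟩ := hst.ocall_inv
  exact ⟨i, w, rfl, _, hst, htb, htb.busy hB⟩

theorem WStep.pret_inv {C C' : Conf} {D : VCtx} (h : WStep C (.pret D) C') :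
    ∃ Ca, Taus C Ca ∧ Step Ca (.mv (.pret D)) C' ∧ C'.Returned := by
  obtain ⟨Ca, Cb, hta, hst, htb⟩ := h
  obtain rfl := htb.eq_of_returned hst.returned_of_pret
  exact ⟨Ca, hta, hst, hst.returned_of_pret⟩

inductive ChunkRun : Conf → Trace → Conf → Prop
  | nil {C} : ChunkRun C [] C
  | cons {C C₁ C₂ C₃ F i w D s} (h1 : Step C (.mv (.ocall i w)) C₁) (h2 : Taus C₁ C₂)
      (h3 : Step C₂ (.mv (.pret D)) C₃) (ht : ChunkRun C₃ s F) :
      ChunkRun C (Move.ocall i w :: Move.pret D :: s) F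

theorem WTrace.chunkRun : ∀ {s : Trace} {C F : Conf}, WTrace C s F → C.Returned → F.Final →
    ChunkRun C s F ∧ F.Returned
  | [], _, _, .nil h, hC, _ => by
      obtain rfl := h.eq_of_returned hC
      exact ⟨.nil, hC⟩
  | [_], _, _, .cons hw (.nil h), hC, hF => by
      obtain ⟨-, -, -, -, -, -, hB⟩ := hw.of_returned hC
      exact ((h.busy hB).not_final hF).elim
  | _ :: _ :: _, _, _, .cons hw (.cons hw' ht), hC, hF => by
      obtain ⟨i, w, rfl, Cb, hst, htb, hB⟩ := hw.of_returned hC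
      obtain ⟨D, rfl, Ca, hta', hst', hR⟩ := hw'.of_busy hB
      obtain ⟨hrun, hF'⟩ := ht.chunkRun hR hF
      exact ⟨.cons hst (htb.trans hta') hst' hrun, hF'⟩

theorem WTrace.decompose {s : Trace} {C F : Conf} (hw : WTrace C s F) (hC : C.Busy)
    (hF : F.Final) :
    ∃ D s' Ca Cb, s = Move.pret D :: s' ∧ Taus C Ca ∧ Step Ca (.mv (.pret D)) Cb ∧
      Cb.Returned ∧ ChunkRun Cb s' F ∧ F.Returned := by
  cases hw with
  | nil h => exact ((h.busy hC).not_final hF).elim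
  | cons hw ht =>
      obtain ⟨D, rfl, Ca, hta, hst, hR⟩ := hw.of_busy hC
      exact ⟨D, _, Ca, _, rfl, hta, hst, hR, ht.chunkRun hR hF⟩

theorem Conf.busy_initConf (e : Expr) : (initConf e).Busy := .inl ⟨_, _, _, _, _, _, rfl⟩

theorem WTrace.append {C D F : Conf} {s s' : Trace} (h1 : WTrace C s D) (h2 : WTrace D s' F) :
    WTrace C (s ++ s') F := by
  induction h1 with
  | nil h =>
      cases h2 with
      | nil h' => exact .nil (h.trans h')
      | cons hw ht =>
          obtain ⟨Ca, Cb, hta, hst, htb⟩ := hw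
          exact .cons ⟨Ca, Cb, h.trans hta, hst, htb⟩ ht
  | cons hw _ ih => exact .cons hw (ih h2)

theorem WTrace.of_steps {C Cb Cc C' : Conf} {η₁ η₂ : Move} (h1 : Step C (.mv η₁) Cb)
    (h2 : Taus Cb Cc) (h3 : Step Cc (.mv η₂) C') : WTrace C [η₁, η₂] C' :=
  .cons ⟨C, Cb, .refl, h1, h2⟩ (.cons ⟨Cc, C', .refl, h3, .refl⟩ (.nil .refl))

theorem WStep2.inv {C C' : Conf} {i : Nat} {w : AVal} {D : VCtx} (hC : C.Returned)
    (h : WStep2 C (.ocall i w) (.pret D) C') :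
    ∃ Cb Cc, Step C (.mv (.ocall i w)) Cb ∧ Taus Cb Cc ∧ Step Cc (.mv (.pret D)) C' ∧
      C'.Returned := by
  obtain ⟨Cm, hw1, hw2⟩ := h
  obtain ⟨-, -, -, Cb, hst1, htb, -⟩ := hw1.of_returned hC
  obtain ⟨Cc, htc, hst2, hR⟩ := hw2.pret_inv
  exact ⟨Cb, Cc, hst1, htb.trans htc, hst2, hR⟩

theorem WTrace.wf {C s F} (h : WTrace C s F) (hI : C.WF) : F.WF := by
  induction h with
  | nil h => exact h.wf hI
  | cons hw _ ih =>
      obtain ⟨Ca, Cb, hta, hst, htb⟩ := hw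
      exact ih (htb.wf (hst.wf (hta.wf hI)))

namespace ChunkRun

theorem mset_subset {C s F} (h : ChunkRun C s F) : C.Mset ⊆ F.Mset := by
  induction h with
  | nil => exact subset_rfl
  | cons h1 h2 h3 _ ih =>
      exact h1.mset_subset.trans ((Taus.mset_subset h2).trans (h3.mset_subset.trans ih))

theorem wf {C s F} (h : ChunkRun C s F) (hI : C.WF) : F.WF := by
  induction h with
  | nil => exact hI
  | cons h1 h2 h3 _ ih => exact ih (h3.wf (h2.wf (h1.wf hI)))

theorem split {s₁ : Trace} {X Y : Conf} (h : ChunkRun X s₁ Y) {C F : Conf} {s₂ : Trace}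
    (h' : ChunkRun C (s₁ ++ s₂) F) : ∃ C', ChunkRun C s₁ C' ∧ ChunkRun C' s₂ F := by
  induction h generalizing C with
  | nil => exact ⟨_, .nil, h'⟩
  | cons _ _ _ _ ih =>
      cases h' with
      | cons hst1 hta hst3 ht =>
          obtain ⟨C', ho1, ho2⟩ := ih ht
          exact ⟨C', .cons hst1 hta hst3 ho1, ho2⟩

theorem pair {N : Set Trace} (hU : UniqueNext N) {s : Trace} {C₁ F₁ : Conf}
    (h1 : ChunkRun C₁ s F₁) {σ : Nat → Nat → Nat} {C₂ F₂ : Conf} (hR : IsReindex σ C₁ C₂)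
    (hI₁ : C₁.WF) (h2 : ChunkRun C₂ s F₂) (hN₁ : F₁.Mset ⊆ N)
    (hN₂ : F₂.Mset ⊆ N) : ∃ σ', IsReindex σ' F₁ F₂ := by
  induction h1 generalizing σ C₂ with
  | nil => cases h2; exact ⟨σ, hR⟩
  | cons hst1 hta1 hst3 ht ih =>
      cases h2 with
      | cons hst1' hta1' hst3' ht' =>
          obtain ⟨σ₁, hR₁⟩ := hR.mv_step_pair hI₁ hst1 hst1'
          obtain ⟨σ₂, hR₂⟩ := hR₁.taus_pair hU hta1 (hst1.wf hI₁) hta1'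
            hst3.atTop_of_pret hst3'.atTop_of_pret
            (hst3.mset_subset.trans (ht.mset_subset.trans hN₁))
            (hst3'.mset_subset.trans (ht'.mset_subset.trans hN₂))
          have hI₁' := hta1.wf (hst1.wf hI₁)
          obtain ⟨σ₃, hR₃⟩ := hR₂.mv_step_pair hI₁' hst3 hst3'
          exact ih hR₃ (hst3.wf hI₁') ht' hN₁

end ChunkRun

theorem IsReindex.chunk {σ : Nat → Nat → Nat} {B C₂ Cb Cc F : Conf} {i : Nat} {w : AVal}
    {D : VCtx} (hR : IsReindex σ B C₂) (hIB : B.WF) (hI₂ : C₂.WF)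
    (h1 : Step B (.mv (.ocall i w)) Cb) (h2 : Taus Cb Cc) (h3 : Step Cc (.mv (.pret D)) F)
    (hfr : ∀ a ∈ w.names, ∀ j, C₂.Amap a j = none) :
    ∃ σ' F₂, WStep2 C₂ (.ocall i w) (.pret D) F₂ ∧ IsReindex σ' F F₂ := by
  obtain ⟨σ₁, Cb₂, hst1, hR₁⟩ := hR.step hIB hI₂ h1 (by rintro _ _ ⟨⟩; exact hfr)
  obtain ⟨σ₂, Cc₂, hta₂, hR₂, hIc₂⟩ := hR₁.taus h2 (h1.wf hIB) (hst1.wf hI₂)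
  obtain ⟨σ₃, F₂, hst3, hR₃⟩ := hR₂.step (h2.wf (h1.wf hIB)) hIc₂ h3 (by rintro _ _ ⟨⟩)
  exact ⟨σ₃, F₂, ⟨Cb₂, ⟨C₂, Cb₂, .refl, hst1, .refl⟩, ⟨Cc₂, F₂, hta₂, hst3, .refl⟩⟩, hR₃⟩

/-! ### Bisimilarity implies equal semantics -/

theorem Step.amap_extends {C l C'} (h : Step C l C') : C.Amap.Extends C'.Amap := by
  cases h <;> first | exact AMap.Extends.refl _ | exact AMap.extends_upd _ _ _ _

theorem Taus.amap_extends {C D} (h : Taus C D) : C.Amap.Extends D.Amap := by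
  induction h with
  | refl => exact AMap.Extends.refl _
  | tail _ hbc ih => exact ih.trans hbc.amap_extends

theorem AMap.Extends.names_subset {A A' : AMap} (h : A.Extends A') : A.names ⊆ A'.names :=
  fun a ⟨j, hj⟩ => ⟨j, h a j hj⟩

theorem MNames.mono {M M' : Set Trace} (h : M ⊆ M') : MNames M ⊆ MNames M' :=
  fun _ ⟨t, ht, hta⟩ => ⟨t, h ht, hta⟩

theorem AMap.names_upd_subset (A : AMap) (ns : List Nat) (j : Nat) (k : List Expr) :
    (A.upd ns j k).names ⊆ A.names ∪ {a | a ∈ ns} := by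
  rintro a ⟨j', hj'⟩
  simp only [AMap.upd] at hj'
  split at hj'
  · exact .inr ‹_ ∧ _›.1
  · exact .inl ⟨j', hj'⟩

theorem mem_mnames_insert {M : Set Trace} {t : Trace} {m : Move} {a : Nat} (h : a ∈ m.intros) :
    a ∈ MNames (insert (t ++ [m]) M) :=
  ⟨t ++ [m], Set.mem_insert _ _, by simp [traceIntros, h]⟩

theorem Step.amap_names_subset {C l C'} (h : Step C l C') :
    C'.Amap.names ⊆ C.Amap.names ∪ MNames C'.Mset ∪
      {a | ∃ i w, l = .mv (.ocall i w) ∧ a ∈ w.names} := by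
  cases h with
  | opRet | opCall =>
      refine (AMap.names_upd_subset _ _ _ _).trans fun a ha => ha.elim (.inl ∘ .inl) fun ha => ?_
      exact .inl (.inr (mem_mnames_insert (by simpa [Move.intros] using ha)))
  | opCallBarb =>
      exact (AMap.names_upd_subset _ _ _ _).trans fun a ha =>
        ha.elim (.inl ∘ .inl) fun ha => .inr ⟨_, _, rfl, ha⟩
  | _ => exact fun a ha => .inl (.inl ha)

theorem Taus.amap_names_subset {C D} (h : Taus C D) :
    D.Amap.names ⊆ C.Amap.names ∪ MNames D.Mset := by
  induction h with
  | refl => exact Set.subset_union_left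
  | tail _ hbc ih =>
      intro a ha
      rcases hbc.amap_names_subset ha with (ha | ha) | ⟨_, _, ⟨⟩, -⟩
      · exact (ih ha).imp_right fun h => MNames.mono hbc.mset_subset h
      · exact .inr ha

theorem chunk_amap_names_subset {C Cb Cc C' : Conf} {i : Nat} {w : AVal} {D : VCtx}
    (h1 : Step C (.mv (.ocall i w)) Cb) (h2 : Taus Cb Cc) (h3 : Step Cc (.mv (.pret D)) C') :
    C'.Amap.names ⊆ C.Amap.names ∪ MNames C'.Mset ∪ {a | a ∈ w.names} := by
  intro a ha
  have hM : Cb.Mset ⊆ C'.Mset := (Taus.mset_subset h2).trans h3.mset_subset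
  rcases h3.amap_names_subset ha with (ha | ha) | ⟨_, _, ⟨⟩, -⟩
  · rcases Taus.amap_names_subset h2 ha with ha | ha
    · rcases h1.amap_names_subset ha with (ha | ha) | ⟨_, _, heq, ha⟩
      · exact .inl (.inl ha)
      · exact .inl (.inr (MNames.mono hM ha))
      · obtain ⟨-, rfl⟩ := Move.ocall.inj (Lab.mv.inj heq)
        exact .inr ha
    · exact .inl (.inr (MNames.mono h3.mset_subset ha))
  · exact .inl (.inr ha)

theorem chunk_amap_extends {C Cb Cc C' : Conf} {l₁ l₂ : Lab} (h1 : Step C l₁ Cb) (h2 : Taus Cb Cc)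
    (h3 : Step Cc l₂ C') : C.Amap.Extends C'.Amap :=
  (h1.amap_extends.trans (Taus.amap_extends h2)).trans h3.amap_extends

theorem Step.names_subset_amap_of_ocall {C C' : Conf} {i : Nat} {w : AVal}
    (h : Step C (.mv (.ocall i w)) C') : {a | a ∈ w.names} ⊆ C'.Amap.names := by
  cases h
  intro a ha
  exact ⟨0, by simp [Conf.Amap, AMap.upd, show a ∈ w.names from ha]⟩

theorem IsWeakSim.mset_eq {R : Conf → Conf → Prop} (hs : IsWeakSim R)
    (hs' : IsWeakSim fun a b => R b a) {C₁ C₂ : Conf} (hR : R C₁ C₂) : C₂.Mset = C₁.Mset :=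
  (hs _ _ hR).2.2.antisymm (hs' _ _ hR).2.2

/-- The inclusion `hnames` keeps the opponent's fresh names fresh on the second side. -/
theorem IsWeakSim.chunkRun {R : Conf → Conf → Prop} (hs : IsWeakSim R)
    (hs' : IsWeakSim fun a b => R b a) {s : Trace} {C₁ F₁ : Conf} (h : ChunkRun C₁ s F₁)
    {C₂ : Conf} (hR : R C₁ C₂) (hC₂ : C₂.Returned)
    (hnames : C₂.Amap.names ⊆ MNames C₂.Mset ∪ C₁.Amap.names) :
    ∃ F₂, WTrace C₂ s F₂ ∧ F₂.Returned ∧ F₂.Mset = F₁.Mset := by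
  induction h generalizing C₂ with
  | nil => exact ⟨C₂, .nil .refl, hC₂, hs.mset_eq hs' hR⟩
  | @cons C₁ X₁ X₂ X₃ F₁ i w D s hst1 htau hst3 _ ih =>
      obtain ⟨A₁, M₁, u₁, rfl, hfresh, -⟩ := hst1.ocall_inv
      have hfr : ∀ a ∈ w.names, a ∉ C₂.names := by
        obtain ⟨A₂, M₂, u₂, rfl⟩ := hC₂
        have hM : M₂ = M₁ := hs.mset_eq hs' hR
        rintro a ha ((hA | hM₂) | h)
        · rcases hnames hA with hM₂ | ⟨j, hj⟩
          · exact (hfresh a ha).2 (hM ▸ hM₂)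
          · simp [Conf.Amap, (hfresh a ha).1 j] at hj
        · exact (hfresh a ha).2 (hM ▸ hM₂)
        · simp [Conf.tr, traceIntros] at h
      obtain ⟨C₂', hW₂, hR'⟩ := (hs _ _ hR).2.1 ⟨_, _, _, _, _, rfl⟩ i w D X₃ hfr
        ⟨_, ⟨_, _, .refl, hst1, htau⟩, ⟨_, _, .refl, hst3, .refl⟩⟩
      obtain ⟨Cb₂, Cc₂, hst1', hta', hst3', hC₂'⟩ := hW₂.inv hC₂
      refine (ih hR' hC₂' ?_).imp fun F₂ ⟨hw, hF⟩ =>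
        ⟨(WTrace.of_steps hst1' hta' hst3').append hw, hF⟩
      intro a ha
      rcases chunk_amap_names_subset hst1' hta' hst3' ha with (ha | ha) | ha
      · rcases hnames ha with ha | ha
        · exact .inl (MNames.mono
            (hst1'.mset_subset.trans ((Taus.mset_subset hta').trans hst3'.mset_subset)) ha)
        · exact .inr ((chunk_amap_extends hst1 htau hst3).names_subset ha)
      · exact .inl ha
      · exact .inr (((Taus.amap_extends htau).trans hst3.amap_extends).names_subset
          (hst1.names_subset_amap_of_ocall ha))

theorem IsWeakSim.sem_subset {R : Conf → Conf → Prop} (hs : IsWeakSim R)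
    (hs' : IsWeakSim fun a b => R b a) {e1 e2 : Expr} (hR0 : R (initConf e1) (initConf e2)) :
    Sem e1 ⊆ Sem e2 := by
  rintro ⟨s, M⟩ ⟨A₁, t₁', V₁, v₁, hw⟩
  obtain ⟨D₀, s', Ca, Cb, rfl, hta, hst, -, hrun, -⟩ :=
    WTrace.decompose hw (Conf.busy_initConf e1) ⟨_, _, _, _, _, rfl⟩
  obtain ⟨C₂, hW₂, hR⟩ := (hs _ _ hR0).1 ⟨e1, rfl⟩ D₀ Cb ⟨Ca, Cb, hta, hst, .refl⟩
  obtain ⟨Ca₂, hta₂, hst₂, hC₂⟩ := hW₂.pret_inv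
  have hnames : C₂.Amap.names ⊆ MNames C₂.Mset ∪ Cb.Amap.names := by
    intro a ha
    rcases hst₂.amap_names_subset ha with (ha | ha) | ⟨_, _, ⟨⟩, -⟩
    · rcases Taus.amap_names_subset hta₂ ha with ⟨_, ha⟩ | ha
      · simp [initConf, Conf.Amap, AMap.empty] at ha
      · exact .inl (MNames.mono hst₂.mset_subset ha)
    · exact .inl ha
  obtain ⟨F₂, hw₂, ⟨A₂, M₂, u₂, rfl⟩, hM⟩ := hs.chunkRun hs' hrun hR hC₂ hnames
  obtain rfl : M₂ = M := hM
  exact ⟨A₂, [], [], u₂, (WTrace.cons hW₂ (.nil .refl)).append hw₂⟩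

/-! ### Equal semantics implies bisimilarity -/

/-- Determinism: a run along the extended trace within the memory bound `N` passes through
`C₂` up to reindexing, so `C₂` can perform the last interaction as well. -/
theorem WTrace.extend {C C₂ F : Conf} {t : Trace} {i : Nat} {w : AVal} {D : VCtx}
    {N : Set Trace} (hC : C.Busy) (hI : C.WF) (hU : UniqueNext N)
    (h₂ : WTrace C t C₂) (hC₂ : C₂.Returned) (hN₂ : C₂.Mset ⊆ N)
    (hF : WTrace C (t ++ [.ocall i w, .pret D]) F) (hFf : F.Final) (hNF : F.Mset ⊆ N)
    (hfr : ∀ a ∈ w.names, ∀ j, C₂.Amap a j = none) :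
    ∃ σ F₂, WStep2 C₂ (.ocall i w) (.pret D) F₂ ∧ IsReindex σ F F₂ := by
  obtain ⟨D₀, s, Ca₂, Cb₂, rfl, hta₂, hst₂, -, hrun₂, -⟩ := h₂.decompose hC hC₂.final
  obtain ⟨_, s', Ca, Cb, heq, hta, hst, -, hrun, -⟩ := hF.decompose hC hFf
  obtain ⟨⟨⟩, rfl⟩ := List.cons.inj heq
  obtain ⟨B, hrunB, hchunk⟩ := hrun₂.split hrun
  have hNB : B.Mset ⊆ N := hchunk.mset_subset.trans hNF
  obtain ⟨σa, hRa⟩ := (isReindex_id C).taus_pair hU hta hI hta₂ hst.atTop_of_pret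
    hst₂.atTop_of_pret (hst.mset_subset.trans (hrunB.mset_subset.trans hNB))
    (hst₂.mset_subset.trans (hrun₂.mset_subset.trans hN₂))
  obtain ⟨σb, hRb⟩ := hRa.mv_step_pair (hta.wf hI) hst hst₂
  have hICb := hst.wf (hta.wf hI)
  obtain ⟨σc, hRc⟩ := hrunB.pair hU hRb hICb hrun₂ hNB hN₂
  cases hchunk with
  | cons h1 h2 h3 hnil =>
      cases hnil
      exact hRc.chunk (hrunB.wf hICb) (h₂.wf hI) h1 h2 h3 hfr

def SameTraceRel (e1 e2 : Expr) (C1 C2 : Conf) : Prop :=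
  (C1 = initConf e1 ∧ C2 = initConf e2) ∨
    ∃ t, WTrace (initConf e1) t C1 ∧ WTrace (initConf e2) t C2 ∧ C1.Returned ∧ C2.Returned ∧
      C1.Mset = C2.Mset

theorem sameTraceRel_comm {e1 e2 : Expr} {C1 C2 : Conf} :
    SameTraceRel e1 e2 C1 C2 ↔ SameTraceRel e2 e1 C2 C1 := by
  unfold SameTraceRel
  constructor <;>
  rintro (⟨h1, h2⟩ | ⟨t, hr1, hr2, hB1, hB2, hM⟩)
  all_goals first | exact .inl ⟨h2, h1⟩ | exact .inr ⟨t, hr2, hr1, hB2, hB1, hM.symm⟩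

theorem mem_sem_of_wtrace {e : Expr} {t : Trace} {C : Conf} (hC : C.Returned)
    (h : WTrace (initConf e) t C) : (t, C.Mset) ∈ Sem e := by
  obtain ⟨A, M, u, rfl⟩ := hC
  exact ⟨A, [], [], u, h⟩

theorem SameTraceRel.isWeakSim {e1 e2 : Expr} {T : Ty} (ht1 : Typed [] e1 T) (ht2 : Typed [] e2 T)
    (hSem : Sem e1 = Sem e2) : IsWeakSim (SameTraceRel e1 e2) := by
  intro C1 C2 hR
  refine ⟨fun hInit D' C1' hW => ?_, fun hFin i w D' C1' hfr hW => ?_, ?_⟩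
  · obtain ⟨rfl, rfl⟩ | ⟨-, -, -, ⟨_, _, _, rfl⟩, -⟩ := hR
    swap
    · obtain ⟨_, ⟨⟩⟩ := hInit
    obtain ⟨-, -, -, hC1'⟩ := hW.pret_inv
    have hw1 : WTrace (initConf e1) [.pret D'] C1' := .cons hW (.nil .refl)
    obtain ⟨A₂, t₂, V₂, v₂, hw2⟩ := hSem ▸ mem_sem_of_wtrace hC1' hw1
    obtain ⟨_, _, Ca₂, Cb₂, heq, hta₂, hst₂, hCb₂, hrun₂, -⟩ :=
      WTrace.decompose hw2 (Conf.busy_initConf e2) ⟨_, _, _, _, _, rfl⟩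
    obtain ⟨⟨⟩, rfl⟩ := List.cons.inj heq
    cases hrun₂
    exact ⟨_, ⟨Ca₂, _, hta₂, hst₂, .refl⟩,
      .inr ⟨_, hw1, .cons ⟨Ca₂, _, hta₂, hst₂, .refl⟩ (.nil .refl), hC1', hCb₂, rfl⟩⟩
  · obtain ⟨rfl, rfl⟩ | ⟨t, hr1, hr2, hB1, hB2, hM⟩ := hR
    · obtain ⟨_, _, _, _, _, ⟨⟩⟩ := hFin
    obtain ⟨Cb, Cc, hst1, htau, hst3, hC1'⟩ := hW.inv hB1
    have hw1 := hr1.append (WTrace.of_steps hst1 htau hst3)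
    obtain ⟨A₂, t₂, V₂, v₂, hw2⟩ := hSem ▸ mem_sem_of_wtrace hC1' hw1
    have hM₁ : C1.Mset ⊆ C1'.Mset :=
      hst1.mset_subset.trans ((Taus.mset_subset htau).trans hst3.mset_subset)
    have hU : UniqueNext C1'.Mset := by
      obtain ⟨A, M, u, rfl⟩ := hC1'
      exact (hw1.wf (wf_initConf ht1)).1
    obtain ⟨σ, F₂, hW₂, hRF⟩ := WTrace.extend (Conf.busy_initConf e2) (wf_initConf ht2)
      hU hr2 hB2 (hM ▸ hM₁) hw2 ⟨_, _, _, _, _, rfl⟩ subset_rfl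
      fun a ha j => by_contra fun h => hfr a ha (.inl (.inl ⟨j, Option.ne_none_iff_isSome.mp h⟩))
    obtain ⟨-, -, -, -, -, hF₂⟩ := hW₂.inv hB2
    obtain ⟨Cm, hwa, hwb⟩ := hW₂
    exact ⟨F₂, ⟨Cm, hwa, hwb⟩, .inr ⟨_, hw1, hr2.append (.cons hwa (.cons hwb (.nil .refl))),
      hC1', hF₂, hRF.mset_eq.symm⟩⟩
  · obtain ⟨rfl, rfl⟩ | ⟨-, -, -, -, -, hM⟩ := hR
    exacts [subset_rfl, hM.ge]

theorem bisim_iff_sem (e1 e2 : Expr) (T : Ty)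
    (h1 : Typed [] e1 T) (h2 : Typed [] e2 T) :
    ExprBisim e1 e2 ↔ Sem e1 = Sem e2 := by
  constructor
  · rintro ⟨R, hs, hs', hR0⟩
    exact (hs.sem_subset hs' hR0).antisymm (hs'.sem_subset hs hR0)
  · intro hSem
    have hflip : (fun C1 C2 => SameTraceRel e1 e2 C2 C1) = SameTraceRel e2 e1 :=
      funext₂ fun _ _ => propext sameTraceRel_comm.symm
    refine ⟨SameTraceRel e1 e2, SameTraceRel.isWeakSim h1 h2 hSem, ?_, .inl ⟨rfl, rfl⟩⟩
    exact hflip ▸ SameTraceRel.isWeakSim h2 h1 hSem.symm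

end PCFv
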